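/- arXiv:1812.06390 — 6 statements merged into one kernel-verified Lean document; each statement's English description precedes it below -/
import Mathlib

section
/- Let d ≥ 1, let f : ℤ^d → ℂ be finitely supported, and let λ ∈ ℂ with λ ∉ [−2d, 2d]. Then Δ − λ is invertible on ℓ²(ℤ^d) and for every ξ ∈ ℤ^d, ((Δ − λ)^{-1} f)(ξ) = (2π)^{−d} ∫_{[−π,π]^d} (∑_{η ∈ ℤ^d} f(η) e^{i k·(ξ−η)}) / (φ(k) − λ) dk. -/
/- STATEMENT 1: Let d ≥ 1, let f : ℤ^d → ℂ be finitely supported, and let λ ∈ ℂ with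
λ ∉ [−2d, 2d].  Then Δ − λ is invertible on ℓ²(ℤ^d) and for every ξ ∈ ℤ^d,
((Δ − λ)^{-1} f)(ξ) = (2π)^{−d} ∫_{[−π,π]^d} (∑_{η ∈ ℤ^d} f(η) e^{i k·(ξ−η)}) / (φ(k) − λ) dk,
where φ(k) = 2∑_{j=1}^d cos k_j. -/

noncomputable section

open MeasureTheory

set_option maxHeartbeats 1000000
set_option synthInstance.maxHeartbeats 1000000

section ResolventAux

local notation "⟪" x ", " y "⟫" => @inner ℂ _ _ x y

/-! ### One-dimensional and product integrals -/

private theorem oneDim (m : ℤ) :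
    (∫ t in Set.Icc (-Real.pi) Real.pi, Complex.exp (Complex.I * m * t)) =
      if m = 0 then (2 * Real.pi : ℂ) else 0 := by
  have hle : (-Real.pi) ≤ Real.pi := by linarith [Real.pi_pos]
  rw [integral_Icc_eq_integral_Ioc, ← intervalIntegral.integral_of_le hle]
  rcases eq_or_ne m 0 with hm | hm
  · simp [hm]
    ring
  · have hc : (Complex.I * m) ≠ 0 := by
      simp [Complex.I_ne_zero, hm]
    rw [if_neg hm]
    have := integral_exp_mul_complex (a := -Real.pi) (b := Real.pi) hc
    rw [this]
    have h1 : Complex.I * m * Real.pi = (m * Real.pi : ℂ) * Complex.I := by ring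
    have h2 : Complex.I * m * (-Real.pi : ℝ) = (-(m * Real.pi) : ℂ) * Complex.I := by
      push_cast; ring
    rw [h1, h2, Complex.exp_mul_I, Complex.exp_mul_I]
    have hs : Complex.sin (m * Real.pi) = 0 := by
      have := Complex.sin_int_mul_pi m
      exact_mod_cast this
    rw [Complex.cos_neg, Complex.sin_neg, hs]
    simp

private theorem prodInt (d : ℕ) (F : Fin d → ℝ → ℂ) :
    (∫ k in Set.Icc (fun _ : Fin d => -Real.pi) (fun _ => Real.pi), ∏ j, F j (k j)) =
      ∏ j, ∫ t in Set.Icc (-Real.pi) Real.pi, F j t := by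
  classical
  rw [← MeasureTheory.integral_indicator measurableSet_Icc]
  have : (Set.Icc (fun _ : Fin d => -Real.pi) (fun _ => Real.pi)).indicator
      (fun k => ∏ j, F j (k j)) =
      fun k => ∏ j, (Set.Icc (-Real.pi) Real.pi).indicator (F j) (k j) := by
    funext k
    by_cases hk : k ∈ Set.Icc (fun _ : Fin d => -Real.pi) (fun _ => Real.pi)
    · rw [Set.indicator_of_mem hk]
      rw [Set.mem_Icc] at hk
      refine Finset.prod_congr rfl fun j _ => ?_
      rw [Set.indicator_of_mem (Set.mem_Icc.mpr ⟨hk.1 j, hk.2 j⟩)]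
    · rw [Set.indicator_of_notMem hk]
      rw [Set.mem_Icc] at hk
      have : ∃ j, k j ∉ Set.Icc (-Real.pi) Real.pi := by
        by_contra hc
        push_neg at hc
        exact hk ⟨fun j => (Set.mem_Icc.mp (hc j)).1, fun j => (Set.mem_Icc.mp (hc j)).2⟩
      obtain ⟨j, hj⟩ := this
      exact (Finset.prod_eq_zero (Finset.mem_univ j) (Set.indicator_of_notMem hj _)).symm
  rw [this, MeasureTheory.integral_fintype_prod_volume_eq_prod]
  exact Finset.prod_congr rfl fun j _ =>
    MeasureTheory.integral_indicator measurableSet_Icc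

/-! ### The box, characters, the symbol -/

private def Box (d : ℕ) : Set (Fin d → ℝ) := Set.Icc (fun _ => -Real.pi) (fun _ => Real.pi)

private def eI (d : ℕ) (x : Fin d → ℤ) : (Fin d → ℝ) → ℂ :=
  fun k => Complex.exp (Complex.I * ((∑ j, k j * (x j : ℝ) : ℝ) : ℂ))

private theorem eI_prod (d : ℕ) (x : Fin d → ℤ) (k : Fin d → ℝ) :
    eI d x k = ∏ j, Complex.exp (Complex.I * (x j : ℂ) * (k j : ℂ)) := by
  rw [eI, ← Complex.exp_sum]
  congr 1
  push_cast
  rw [Finset.mul_sum]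
  refine Finset.sum_congr rfl fun j _ => by ring

private theorem intBox_eI (d : ℕ) (x : Fin d → ℤ) :
    (∫ k in Box d, eI d x k) = if x = 0 then ((2 * Real.pi : ℂ)) ^ d else 0 := by
  have h1 : (∫ k in Box d, eI d x k) =
      ∏ j, ∫ t in Set.Icc (-Real.pi) Real.pi, Complex.exp (Complex.I * (x j : ℂ) * t) := by
    rw [Box, ← prodInt d fun j t => Complex.exp (Complex.I * (x j : ℂ) * t)]
    exact setIntegral_congr_fun measurableSet_Icc fun k _ => eI_prod d x k
  rw [h1]
  rcases eq_or_ne x 0 with hx | hx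
  · rw [if_pos hx]
    subst hx
    have h2 : ∀ j : Fin d, (∫ t in Set.Icc (-Real.pi) Real.pi,
        Complex.exp (Complex.I * (((0 : Fin d → ℤ) j : ℤ) : ℂ) * t)) = (2 * Real.pi : ℂ) := by
      intro j
      have := oneDim ((0 : Fin d → ℤ) j)
      simpa using this
    rw [Finset.prod_congr rfl fun j _ => h2 j]
    simp
  · rw [if_neg hx]
    have : ∃ j, x j ≠ 0 := by
      by_contra hc; push_neg at hc; exact hx (funext hc)
    obtain ⟨j, hj⟩ := this
    refine Finset.prod_eq_zero (Finset.mem_univ j) ?_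
    rw [oneDim (x j), if_neg hj]

private theorem den_bound (d : ℕ) (lam : ℂ)
    (hlam : ∀ t : ℝ, t ∈ Set.Icc (-(2 * (d : ℝ))) (2 * (d : ℝ)) → lam ≠ t) :
    ∃ δ : ℝ, 0 < δ ∧ ∀ k : Fin d → ℝ,
      δ ≤ ‖((2 * ∑ j, Real.cos (k j) : ℝ) : ℂ) - lam‖ := by
  have hK : IsCompact (Set.Icc (-(2 * (d : ℝ))) (2 * (d : ℝ))) := isCompact_Icc
  have hne : (Set.Icc (-(2 * (d : ℝ))) (2 * (d : ℝ))).Nonempty :=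
    ⟨0, by constructor <;> [nlinarith [Nat.cast_nonneg (α := ℝ) d]; positivity]⟩
  have hcont : ContinuousOn (fun t : ℝ => ‖(t : ℂ) - lam‖)
      (Set.Icc (-(2 * (d : ℝ))) (2 * (d : ℝ))) :=
    (Continuous.norm (by continuity)).continuousOn
  obtain ⟨t₀, ht₀, hmin⟩ := hK.exists_isMinOn hne hcont
  refine ⟨‖(t₀ : ℂ) - lam‖, ?_, ?_⟩
  · rw [norm_pos_iff]
    intro h
    rw [sub_eq_zero] at h; exact hlam t₀ ht₀ h.symm
  · intro k
    have hs : (2 * ∑ j, Real.cos (k j) : ℝ) ∈ Set.Icc (-(2 * (d : ℝ))) (2 * (d : ℝ)) := by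
      have h1 : |∑ j, Real.cos (k j)| ≤ (d : ℝ) := by
        calc |∑ j, Real.cos (k j)| ≤ ∑ j : Fin d, |Real.cos (k j)| :=
              Finset.abs_sum_le_sum_abs _ _
          _ ≤ ∑ _j : Fin d, (1 : ℝ) :=
              Finset.sum_le_sum fun j _ => Real.abs_cos_le_one _
          _ = d := by simp
      rw [abs_le] at h1
      constructor <;> nlinarith [h1.1, h1.2]
    exact hmin hs

section GreenFunction

variable (d : ℕ) (lam : ℂ)

private def hden : (Fin d → ℝ) → ℂ := fun k => ((2 * ∑ j, Real.cos (k j) : ℝ) : ℂ) - lam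
private def hinv : (Fin d → ℝ) → ℂ := fun k => (hden d lam k)⁻¹
private def GF : (Fin d → ℤ) → ℂ := fun x =>
  ((2 * Real.pi : ℂ) ^ d)⁻¹ * ∫ k in Box d, eI d x k * hinv d lam k

private theorem hden_cont : Continuous (hden d lam) :=
  (Complex.continuous_ofReal.comp (continuous_const.mul
    (continuous_finset_sum _ fun j _ => Real.continuous_cos.comp (continuous_apply j)))).sub
    continuous_const

private theorem eI_cont (x : Fin d → ℤ) : Continuous (eI d x) :=
  Complex.continuous_exp.comp (continuous_const.mul (Complex.continuous_ofReal.comp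
    (continuous_finset_sum _ fun j _ => (continuous_apply j).mul continuous_const)))

private theorem eI_norm (x : Fin d → ℤ) (k : Fin d → ℝ) : ‖eI d x k‖ = 1 := by
  rw [eI, mul_comm, Complex.norm_exp_ofReal_mul_I]

private theorem hden_ne {δ : ℝ} (hδ0 : 0 < δ) (hδ : ∀ k, δ ≤ ‖hden d lam k‖) (k : Fin d → ℝ) :
    hden d lam k ≠ 0 :=
  fun h => absurd (hδ k) (by rw [h, norm_zero]; linarith)

private theorem hinv_cont {δ : ℝ} (hδ0 : 0 < δ) (hδ : ∀ k, δ ≤ ‖hden d lam k‖) :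
    Continuous (hinv d lam) :=
  (hden_cont d lam).inv₀ (hden_ne d lam hδ0 hδ)

private theorem hinv_norm {δ : ℝ} (hδ0 : 0 < δ) (hδ : ∀ k, δ ≤ ‖hden d lam k‖) (k : Fin d → ℝ) :
    ‖hinv d lam k‖ ≤ δ⁻¹ := by
  rw [hinv, norm_inv]
  exact inv_anti₀ hδ0 (hδ k)

instance (d : ℕ) : IsFiniteMeasure ((volume : Measure (Fin d → ℝ)).restrict (Box d)) :=
  ⟨by rw [Measure.restrict_apply_univ]; exact (isCompact_Icc).measure_lt_top⟩

private theorem memB (g : (Fin d → ℝ) → ℂ) (hg : Continuous g) (C : ℝ) (hC : ∀ k, ‖g k‖ ≤ C) :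
    MemLp g 2 ((volume : Measure (Fin d → ℝ)).restrict (Box d)) :=
  (memLp_top_of_bound hg.aestronglyMeasurable C
    (Filter.Eventually.of_forall hC)).mono_exponent le_top

private theorem inner_toLp (g₁ g₂ : (Fin d → ℝ) → ℂ)
    (h₁ : MemLp g₁ 2 ((volume : Measure (Fin d → ℝ)).restrict (Box d)))
    (h₂ : MemLp g₂ 2 ((volume : Measure (Fin d → ℝ)).restrict (Box d))) :
    ⟪h₁.toLp g₁, h₂.toLp g₂⟫ = ∫ k in Box d, (starRingEnd ℂ) (g₁ k) * g₂ k := by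
  rw [MeasureTheory.L2.inner_def]
  apply integral_congr_ae
  filter_upwards [h₁.coeFn_toLp, h₂.coeFn_toLp] with k e1 e2
  rw [RCLike.inner_apply, e1, e2, mul_comm]

private theorem twopi_pow_ne (d : ℕ) : ((2 * Real.pi : ℂ)) ^ d ≠ 0 := by
  apply pow_ne_zero
  have h : (0:ℝ) < 2 * Real.pi := by positivity
  intro hc
  have : ((2 * Real.pi : ℝ) : ℂ) = 0 := by push_cast; exact hc
  rw [Complex.ofReal_eq_zero] at this
  linarith

private theorem eI_conj (x : Fin d → ℤ) (k : Fin d → ℝ) :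
    (starRingEnd ℂ) (eI d (-x) k) = eI d x k := by
  rw [eI, eI, ← Complex.exp_conj]
  congr 1
  rw [map_mul, Complex.conj_I, Complex.conj_ofReal]
  simp only [Pi.neg_apply, Int.cast_neg, mul_neg, Finset.sum_neg_distrib]
  push_cast
  ring

private theorem eI_mul (x y : Fin d → ℤ) (k : Fin d → ℝ) :
    eI d x k * eI d y k = eI d (x + y) k := by
  rw [eI, eI, eI, ← Complex.exp_add]
  congr 1
  push_cast
  rw [← mul_add, ← Finset.sum_add_distrib]
  congr 1
  exact Finset.sum_congr rfl fun j _ => by rw [Pi.add_apply]; push_cast; ring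

private theorem GF_memℓp {δ : ℝ} (hδ0 : 0 < δ) (hδ : ∀ k, δ ≤ ‖hden d lam k‖) :
    Memℓp (GF d lam) 2 := by
  classical
  set μ := (volume : Measure (Fin d → ℝ)).restrict (Box d) with hμ
  set c : ℝ := Real.sqrt (((2 * Real.pi) ^ d)⁻¹) with hc
  have hcpos : 0 < c := Real.sqrt_pos.mpr (by positivity)
  have hcsq : c ^ 2 = ((2 * Real.pi) ^ d)⁻¹ := Real.sq_sqrt (by positivity)
  have vmem : ∀ x : Fin d → ℤ, MemLp (fun k => (c:ℂ) * eI d (-x) k) 2 μ := fun x =>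
    memB d (fun k => (c:ℂ) * eI d (-x) k)
      (continuous_const.mul (eI_cont d _)) c
      (fun k => by rw [norm_mul, eI_norm, mul_one, Complex.norm_real,
        Real.norm_eq_abs, abs_of_pos hcpos])
  set v : (Fin d → ℤ) → Lp ℂ 2 μ := fun x => (vmem x).toLp _ with hv
  have hon : Orthonormal ℂ v := by
    rw [orthonormal_iff_ite]
    intro x y
    rw [hv]
    rw [inner_toLp d _ _ (vmem x) (vmem y)]
    have : ∀ k, (starRingEnd ℂ) ((c:ℂ) * eI d (-x) k) * ((c:ℂ) * eI d (-y) k)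
        = ((c:ℂ))^2 * eI d (x - y) k := by
      intro k
      rw [map_mul, Complex.conj_ofReal, eI_conj]
      rw [mul_mul_mul_comm, ← sq, eI_mul]
      rw [sub_eq_add_neg]
    rw [integral_congr_ae (Filter.Eventually.of_forall fun k => this k)]
    rw [integral_const_mul, intBox_eI]
    rcases eq_or_ne x y with h | h
    · rw [if_pos (sub_eq_zero.mpr h), if_pos h]
      have : ((c:ℂ))^2 = (((2 * Real.pi : ℝ) ^ d)⁻¹ : ℝ) := by
        rw [← hcsq]; push_cast; ring
      rw [this]
      push_cast
      rw [inv_mul_cancel₀]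
      exact twopi_pow_ne d
    · rw [if_neg (fun hs => h (sub_eq_zero.mp hs)), if_neg h, mul_zero]
  have hmem : MemLp (hinv d lam) 2 μ :=
    memB d _ (hinv_cont d lam hδ0 hδ) δ⁻¹ (hinv_norm d lam hδ0 hδ)
  set hL2 : Lp ℂ 2 μ := hmem.toLp _ with hh
  set A : ℝ := c * (2 * Real.pi) ^ d with hA
  have hApos : 0 < A := by positivity
  have hinner : ∀ x, ⟪v x, hL2⟫ = (A:ℂ) * GF d lam x := by
    intro x
    rw [hv, hh, inner_toLp d _ _ (vmem x) hmem]
    have : ∀ k, (starRingEnd ℂ) ((c:ℂ) * eI d (-x) k) * hinv d lam k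
        = (c:ℂ) * (eI d x k * hinv d lam k) := by
      intro k
      rw [map_mul, Complex.conj_ofReal, eI_conj, mul_assoc]
    rw [integral_congr_ae (Filter.Eventually.of_forall fun k => this k), integral_const_mul]
    rw [GF, hA]
    push_cast
    rw [mul_assoc, ← mul_assoc ((2 * Real.pi : ℂ) ^ d), mul_inv_cancel₀ (twopi_pow_ne d), one_mul]
  have hb := hon.inner_products_summable hL2
  have hb2 : Summable fun x => A ^ 2 * ‖GF d lam x‖ ^ 2 := by
    refine hb.congr fun x => ?_
    rw [hinner, norm_mul, Complex.norm_real, Real.norm_eq_abs, abs_of_pos hApos, mul_pow]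
  have hb3 : Summable fun x => ‖GF d lam x‖ ^ 2 := by
    have := hb2.mul_left ((A ^ 2)⁻¹)
    refine this.congr fun x => ?_
    field_simp
  apply memℓp_gen
  have h2 : ((2:ENNReal)).toReal = (2:ℝ) := by norm_num
  rw [h2]
  refine hb3.congr fun x => ?_
  rw [← Real.rpow_natCast ‖GF d lam x‖ 2]
  norm_num

private theorem intOn (g : (Fin d → ℝ) → ℂ) (hg : Continuous g) :
    IntegrableOn g (Box d) volume :=
  hg.continuousOn.integrableOn_compact isCompact_Icc

private theorem eI_single (j : Fin d) (k : Fin d → ℝ) :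
    eI d (Pi.single j 1) k = Complex.exp (Complex.I * ((k j : ℝ) : ℂ)) := by
  rw [eI]
  congr 2
  rw [Finset.sum_eq_single j]
  · rw [Pi.single_eq_same]; norm_num
  · intro m _ hm
    rw [Pi.single_eq_of_ne hm]; norm_num
  · intro h; exact absurd (Finset.mem_univ j) h

private theorem eI_single_neg (j : Fin d) (k : Fin d → ℝ) :
    eI d (-Pi.single j 1) k = Complex.exp (-(Complex.I * ((k j : ℝ) : ℂ))) := by
  rw [eI]
  congr 1
  have hs : (∑ m, k m * (((-Pi.single j 1 : Fin d → ℤ)) m : ℝ)) = -(k j) := by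
    rw [Finset.sum_eq_single j]
    · rw [Pi.neg_apply, Pi.single_eq_same]; norm_num
    · intro m _ hm
      rw [Pi.neg_apply, Pi.single_eq_of_ne hm]; norm_num
    · intro h; exact absurd (Finset.mem_univ j) h
  rw [hs]
  push_cast
  ring

private theorem two_cos_eq (t : ℝ) :
    Complex.exp (Complex.I * (t : ℂ)) + Complex.exp (-(Complex.I * (t : ℂ)))
      = ((2 * Real.cos t : ℝ) : ℂ) := by
  have h1 : Complex.I * (t : ℂ) = (t : ℂ) * Complex.I := mul_comm _ _
  have h2 : -(Complex.I * (t : ℂ)) = (-(t : ℂ)) * Complex.I := by ring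
  rw [h2, h1, Complex.exp_mul_I, Complex.exp_mul_I, Complex.cos_neg, Complex.sin_neg]
  push_cast
  ring

private theorem green {δ : ℝ} (hδ0 : 0 < δ) (hδ : ∀ k, δ ≤ ‖hden d lam k‖) (x : Fin d → ℤ) :
    (∑ j : Fin d, (GF d lam (x + Pi.single j 1) + GF d lam (x - Pi.single j 1)))
      - lam * GF d lam x = if x = 0 then 1 else 0 := by
  have hic := hinv_cont d lam hδ0 hδ
  have hIF : IntegrableOn (fun k => eI d x k * hinv d lam k) (Box d) volume :=
    intOn d _ ((eI_cont d x).mul hic)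
  have hIA : ∀ j : Fin d, IntegrableOn
      (fun k => eI d x k * Complex.exp (Complex.I * ((k j : ℝ) : ℂ)) * hinv d lam k)
      (Box d) volume := fun j =>
    intOn d _ (((eI_cont d x).mul (Complex.continuous_exp.comp
      (continuous_const.mul (Complex.continuous_ofReal.comp (continuous_apply j))))).mul hic)
  have hIB : ∀ j : Fin d, IntegrableOn
      (fun k => eI d x k * Complex.exp (-(Complex.I * ((k j : ℝ) : ℂ))) * hinv d lam k)
      (Box d) volume := fun j =>
    intOn d _ (((eI_cont d x).mul (Complex.continuous_exp.comp
      ((continuous_const.mul (Complex.continuous_ofReal.comp (continuous_apply j))).neg))).mul hic)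
  have h1 : ∀ j : Fin d, GF d lam (x + Pi.single j 1) = ((2 * Real.pi : ℂ) ^ d)⁻¹ *
      ∫ k in Box d, eI d x k * Complex.exp (Complex.I * ((k j : ℝ) : ℂ)) * hinv d lam k := by
    intro j
    rw [GF]
    congr 1
    refine setIntegral_congr_fun measurableSet_Icc fun k _ => ?_
    rw [← eI_mul, eI_single]
  have h2 : ∀ j : Fin d, GF d lam (x - Pi.single j 1) = ((2 * Real.pi : ℂ) ^ d)⁻¹ *
      ∫ k in Box d, eI d x k * Complex.exp (-(Complex.I * ((k j : ℝ) : ℂ))) * hinv d lam k := by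
    intro j
    rw [GF]
    congr 1
    refine setIntegral_congr_fun measurableSet_Icc fun k _ => ?_
    rw [sub_eq_add_neg, ← eI_mul, eI_single_neg]
  simp only [h1, h2]
  simp only [GF, ← mul_add]
  rw [← Finset.mul_sum]
  rw [show ∀ a b : ℂ, ((2 * Real.pi : ℂ) ^ d)⁻¹ * a - lam * (((2 * Real.pi : ℂ) ^ d)⁻¹ * b) =
      ((2 * Real.pi : ℂ) ^ d)⁻¹ * (a - lam * b) from fun a b => by ring]
  have hcomb : (∑ j : Fin d,
        ((∫ k in Box d, eI d x k * Complex.exp (Complex.I * ((k j : ℝ) : ℂ)) * hinv d lam k) +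
         (∫ k in Box d, eI d x k * Complex.exp (-(Complex.I * ((k j : ℝ) : ℂ))) * hinv d lam k)))
      - lam * (∫ k in Box d, eI d x k * hinv d lam k)
      = ∫ k in Box d, eI d x k := by
    have e1 : ∀ j : Fin d,
        ((∫ k in Box d, eI d x k * Complex.exp (Complex.I * ((k j : ℝ) : ℂ)) * hinv d lam k) +
         (∫ k in Box d, eI d x k * Complex.exp (-(Complex.I * ((k j : ℝ) : ℂ))) * hinv d lam k))
        = ∫ k in Box d, (eI d x k * Complex.exp (Complex.I * ((k j : ℝ) : ℂ)) * hinv d lam k +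
            eI d x k * Complex.exp (-(Complex.I * ((k j : ℝ) : ℂ))) * hinv d lam k) := fun j =>
      (integral_add (hIA j) (hIB j)).symm
    simp only [e1]
    have e2 : (∑ j : Fin d, ∫ k in Box d,
        (eI d x k * Complex.exp (Complex.I * ((k j : ℝ) : ℂ)) * hinv d lam k +
         eI d x k * Complex.exp (-(Complex.I * ((k j : ℝ) : ℂ))) * hinv d lam k))
        = ∫ k in Box d, ∑ j : Fin d,
          (eI d x k * Complex.exp (Complex.I * ((k j : ℝ) : ℂ)) * hinv d lam k +
           eI d x k * Complex.exp (-(Complex.I * ((k j : ℝ) : ℂ))) * hinv d lam k) :=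
      (integral_finset_sum _ fun j _ => (hIA j).add (hIB j)).symm
    rw [e2]
    have e4 : IntegrableOn (fun k => ∑ j : Fin d,
        (eI d x k * Complex.exp (Complex.I * ((k j : ℝ) : ℂ)) * hinv d lam k +
         eI d x k * Complex.exp (-(Complex.I * ((k j : ℝ) : ℂ))) * hinv d lam k)) (Box d) volume :=
      integrable_finset_sum _ fun j _ => (hIA j).add (hIB j)
    rw [← integral_const_mul, ← integral_sub e4 (hIF.const_mul lam)]
    refine setIntegral_congr_fun measurableSet_Icc fun k _ => ?_
    have hfac : (∑ j : Fin d,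
        (eI d x k * Complex.exp (Complex.I * ((k j : ℝ) : ℂ)) * hinv d lam k +
         eI d x k * Complex.exp (-(Complex.I * ((k j : ℝ) : ℂ))) * hinv d lam k))
        - lam * (eI d x k * hinv d lam k)
        = (eI d x k * hinv d lam k) *
          ((∑ j : Fin d, (Complex.exp (Complex.I * ((k j : ℝ) : ℂ)) +
            Complex.exp (-(Complex.I * ((k j : ℝ) : ℂ))))) - lam) := by
      rw [mul_sub, Finset.mul_sum]
      congr 1
      · exact Finset.sum_congr rfl fun j _ => by ring
      · ring
    rw [hfac]
    have hsum : (∑ j : Fin d, (Complex.exp (Complex.I * ((k j : ℝ) : ℂ)) +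
        Complex.exp (-(Complex.I * ((k j : ℝ) : ℂ))))) = ((2 * ∑ j, Real.cos (k j) : ℝ) : ℂ) := by
      rw [Finset.sum_congr rfl fun j _ => two_cos_eq (k j)]
      push_cast
      rw [Finset.mul_sum]
    rw [hsum]
    show eI d x k * hinv d lam k * hden d lam k = eI d x k
    rw [mul_assoc, hinv, inv_mul_cancel₀ (hden_ne d lam hδ0 hδ k), mul_one]
  rw [hcomb, intBox_eI]
  rcases eq_or_ne x 0 with hx | hx
  · rw [if_pos hx, if_pos hx, inv_mul_cancel₀ (twopi_pow_ne d)]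
  · rw [if_neg hx, if_neg hx, mul_zero]

end GreenFunction

/-! ### Translation operators on `ℓ²(ℤ^d)` and self-adjointness -/

section Lattice

variable (d : ℕ)

private theorem h2pos : 0 < (2 : ENNReal).toReal := by norm_num

private theorem memT (ψ : (Fin d → ℤ) → ℂ) (hψ : Memℓp ψ 2) (v : Fin d → ℤ) :
    Memℓp (fun ξ => ψ (ξ + v)) 2 := by
  apply memℓp_gen
  have h := (memℓp_gen_iff h2pos).mp hψ
  have h2 := ((Equiv.addRight v).summable_iff
    (f := fun ξ => ‖ψ ξ‖ ^ (2 : ENNReal).toReal)).mpr h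
  exact h2.congr fun ξ => by simp

private def Tr (v : Fin d → ℤ) (ψ : lp (fun _ : (Fin d → ℤ) => ℂ) 2) :
    lp (fun _ : (Fin d → ℤ) => ℂ) 2 :=
  ⟨fun ξ => ψ (ξ + v), memT d ψ (lp.memℓp ψ) v⟩

private theorem Tr_apply (v : Fin d → ℤ) (ψ : lp (fun _ : (Fin d → ℤ) => ℂ) 2)
    (ξ : Fin d → ℤ) : (Tr d v ψ) ξ = ψ (ξ + v) := rfl

private theorem Tr_norm (v : Fin d → ℤ) (ψ : lp (fun _ : (Fin d → ℤ) => ℂ) 2) :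
    ‖Tr d v ψ‖ = ‖ψ‖ := by
  rw [lp.norm_eq_tsum_rpow h2pos, lp.norm_eq_tsum_rpow h2pos]
  congr 1
  have := (Equiv.addRight v).tsum_eq (f := fun ξ => ‖ψ ξ‖ ^ (2 : ENNReal).toReal)
  rw [← this]
  exact tsum_congr fun ξ => by simp [Tr_apply]

private theorem Tr_inner (v : Fin d → ℤ) (ψ χ : lp (fun _ : (Fin d → ℤ) => ℂ) 2) :
    ⟪Tr d v ψ, χ⟫ = ⟪ψ, Tr d (-v) χ⟫ := by
  rw [lp.inner_eq_tsum, lp.inner_eq_tsum]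
  have := (Equiv.addRight v).tsum_eq (f := fun ξ => ⟪ψ ξ, (Tr d (-v) χ) ξ⟫)
  rw [← this]
  exact tsum_congr fun ξ => by simp [Tr_apply]

variable (Δ : lp (fun _ : (Fin d → ℤ) => ℂ) 2 →L[ℂ] lp (fun _ : (Fin d → ℤ) => ℂ) 2)
    (hΔ : ∀ (ψ : lp (fun _ : (Fin d → ℤ) => ℂ) 2) (ξ : Fin d → ℤ),
      (Δ ψ) ξ = ∑ j : Fin d, (ψ (ξ + Pi.single j 1) + ψ (ξ - Pi.single j 1)))

include hΔ

private theorem Delta_eq (ψ : lp (fun _ : (Fin d → ℤ) => ℂ) 2) :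
    Δ ψ = ∑ j : Fin d, (Tr d (Pi.single j 1) ψ + Tr d (-(Pi.single j 1)) ψ) := by
  apply lp.ext
  funext ξ
  rw [hΔ]
  have : ⇑(∑ j : Fin d, (Tr d (Pi.single j 1) ψ + Tr d (-(Pi.single j 1)) ψ))
      = ∑ j : Fin d, ⇑(Tr d (Pi.single j 1) ψ + Tr d (-(Pi.single j 1)) ψ) :=
    lp.coeFn_sum _ _
  rw [this, Finset.sum_apply]
  refine Finset.sum_congr rfl fun j _ => ?_
  rw [lp.coeFn_add, Pi.add_apply, Tr_apply, Tr_apply, sub_eq_add_neg]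

private theorem Delta_sa : IsSelfAdjoint Δ := by
  apply LinearMap.IsSymmetric.isSelfAdjoint
  intro ψ χ
  show ⟪Δ ψ, χ⟫ = ⟪ψ, Δ χ⟫
  rw [Delta_eq d Δ hΔ ψ, Delta_eq d Δ hΔ χ, sum_inner, inner_sum]
  refine Finset.sum_congr rfl fun j _ => ?_
  rw [inner_add_left, inner_add_right, Tr_inner, Tr_inner, neg_neg]
  exact add_comm _ _

private theorem Delta_norm : ‖Δ‖ ≤ 2 * d := by
  refine ContinuousLinearMap.opNorm_le_bound _ (by positivity) fun ψ => ?_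
  rw [Delta_eq d Δ hΔ ψ]
  calc ‖∑ j : Fin d, (Tr d (Pi.single j 1) ψ + Tr d (-(Pi.single j 1)) ψ)‖
      ≤ ∑ j : Fin d, ‖Tr d (Pi.single j 1) ψ + Tr d (-(Pi.single j 1)) ψ‖ :=
        norm_sum_le _ _
    _ ≤ ∑ _j : Fin d, (2 * ‖ψ‖) := by
        refine Finset.sum_le_sum fun j _ => ?_
        calc ‖Tr d (Pi.single j 1) ψ + Tr d (-(Pi.single j 1)) ψ‖
            ≤ ‖Tr d (Pi.single j 1) ψ‖ + ‖Tr d (-(Pi.single j 1)) ψ‖ := norm_add_le _ _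
          _ = 2 * ‖ψ‖ := by rw [Tr_norm, Tr_norm]; ring
    _ = 2 * d * ‖ψ‖ := by
        rw [Finset.sum_const, Finset.card_univ, Fintype.card_fin, nsmul_eq_mul]; ring

private theorem part1 (lam : ℂ)
    (hlam : ∀ t : ℝ, t ∈ Set.Icc (-(2 * (d : ℝ))) (2 * (d : ℝ)) → lam ≠ t) :
    IsUnit (Δ - lam • 1) := by
  by_contra h
  have hmem : lam ∈ spectrum ℂ Δ := by
    rw [spectrum.mem_iff]
    intro hu
    apply h
    have := hu.neg
    rwa [neg_sub, Algebra.algebraMap_eq_smul_one] at this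
  have hre := (Delta_sa d Δ hΔ).mem_spectrum_eq_re hmem
  haveI : Nontrivial (lp (fun _ : (Fin d → ℤ) => ℂ) 2) := by
    refine ⟨0, lp.single 2 (fun _ => 0) (1:ℂ), fun hc => ?_⟩
    have := congrFun (congrArg Subtype.val hc) (fun _ => 0)
    rw [lp.single_apply_self] at this
    exact one_ne_zero this.symm
  have hb := spectrum.norm_le_norm_of_mem hmem
  have hbd : ‖lam‖ ≤ 2 * d := le_trans hb (Delta_norm d Δ hΔ)
  refine hlam lam.re ?_ hre
  have habs : |lam.re| ≤ ‖lam‖ := Complex.abs_re_le_norm lam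
  rw [Set.mem_Icc]
  constructor <;> [linarith [(abs_le.mp (le_trans habs hbd)).1];
    linarith [(abs_le.mp (le_trans habs hbd)).2]]

end Lattice

end ResolventAux

theorem resolvent_formula_off_spectrum (d : ℕ) (hd : 1 ≤ d)
    (Δ : lp (fun _ : (Fin d → ℤ) => ℂ) 2 →L[ℂ] lp (fun _ : (Fin d → ℤ) => ℂ) 2)
    (hΔ : ∀ (ψ : lp (fun _ : (Fin d → ℤ) => ℂ) 2) (ξ : Fin d → ℤ),
      (Δ ψ) ξ = ∑ j : Fin d, (ψ (ξ + Pi.single j 1) + ψ (ξ - Pi.single j 1)))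
    (f : lp (fun _ : (Fin d → ℤ) => ℂ) 2) (hf : {ξ | f ξ ≠ 0}.Finite)
    (lam : ℂ) (hlam : ∀ t : ℝ, t ∈ Set.Icc (-(2 * (d : ℝ))) (2 * (d : ℝ)) → lam ≠ t) :
    IsUnit (Δ - lam • 1) ∧
    ∀ ψ : lp (fun _ : (Fin d → ℤ) => ℂ) 2, (Δ - lam • 1) ψ = f →
      ∀ ξ : Fin d → ℤ,
        ψ ξ = ((2 * Real.pi : ℂ) ^ d)⁻¹ *
          ∫ k in Set.Icc (fun _ : Fin d => -Real.pi) (fun _ => Real.pi),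
            (∑ᶠ η : Fin d → ℤ,
                f η * Complex.exp (Complex.I * ↑(∑ j, k j * ((ξ j : ℝ) - (η j : ℝ))))) /
              ((2 * ∑ j, Real.cos (k j) : ℝ) - lam) := by
  classical
  obtain ⟨δ, hδ0, hδ⟩ := den_bound d lam hlam
  have hunit : IsUnit (Δ - lam • 1) := part1 d Δ hΔ lam hlam
  refine ⟨hunit, ?_⟩
  intro ψ hψ ξ
  set s : Finset (Fin d → ℤ) := hf.toFinset with hs
  have hGF : Memℓp (GF d lam) 2 := GF_memℓp d lam hδ0 hδ
  have htrans : ∀ η : Fin d → ℤ, Memℓp (fun ζ => GF d lam (ζ - η)) 2 := by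
    intro η
    have := memT d (GF d lam) hGF (-η)
    simpa [sub_eq_add_neg] using this
  have hmemΨ : ∀ t : Finset (Fin d → ℤ),
      Memℓp (fun ζ => ∑ η ∈ t, f η * GF d lam (ζ - η)) 2 := by
    intro t
    induction t using Finset.induction_on with
    | empty => simp only [Finset.sum_empty]; exact zero_memℓp
    | insert _ _ hnotmem ih =>
      simp only [Finset.sum_insert hnotmem]
      exact ((htrans _).const_mul _).add ih
  set Ψ : lp (fun _ : (Fin d → ℤ) => ℂ) 2 :=
    ⟨fun ζ => ∑ η ∈ s, f η * GF d lam (ζ - η), hmemΨ s⟩ with hΨdef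
  have hΨap : ∀ ζ : Fin d → ℤ, Ψ ζ = ∑ η ∈ s, f η * GF d lam (ζ - η) := fun _ => rfl
  have happ : (Δ - lam • 1) Ψ = f := by
    apply lp.ext
    funext ζ
    have hsub : (Δ - lam • 1) Ψ = Δ Ψ - lam • Ψ := by
      rw [ContinuousLinearMap.sub_apply, ContinuousLinearMap.smul_apply,
        ContinuousLinearMap.one_apply]
    rw [hsub, lp.coeFn_sub, Pi.sub_apply, lp.coeFn_smul, Pi.smul_apply, smul_eq_mul]
    rw [hΔ Ψ ζ]
    have key : (∑ j : Fin d, (Ψ (ζ + Pi.single j 1) + Ψ (ζ - Pi.single j 1))) - lam * Ψ ζ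
        = ∑ η ∈ s, f η * ((∑ j : Fin d, (GF d lam ((ζ - η) + Pi.single j 1) +
            GF d lam ((ζ - η) - Pi.single j 1))) - lam * GF d lam (ζ - η)) := by
      calc (∑ j : Fin d, (Ψ (ζ + Pi.single j 1) + Ψ (ζ - Pi.single j 1))) - lam * Ψ ζ
          = (∑ j : Fin d, ∑ η ∈ s, (f η * GF d lam ((ζ - η) + Pi.single j 1) +
              f η * GF d lam ((ζ - η) - Pi.single j 1)))
            - ∑ η ∈ s, lam * (f η * GF d lam (ζ - η)) := by
            congr 1
            · refine Finset.sum_congr rfl fun j _ => ?_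
              rw [hΨap, hΨap, ← Finset.sum_add_distrib]
              refine Finset.sum_congr rfl fun η _ => ?_
              rw [sub_add_eq_add_sub, sub_right_comm]
            · rw [hΨap, Finset.mul_sum]
        _ = (∑ η ∈ s, ∑ j : Fin d, (f η * GF d lam ((ζ - η) + Pi.single j 1) +
              f η * GF d lam ((ζ - η) - Pi.single j 1)))
            - ∑ η ∈ s, lam * (f η * GF d lam (ζ - η)) := by rw [Finset.sum_comm]
        _ = ∑ η ∈ s, f η * ((∑ j : Fin d, (GF d lam ((ζ - η) + Pi.single j 1) +
              GF d lam ((ζ - η) - Pi.single j 1))) - lam * GF d lam (ζ - η)) := by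
            rw [← Finset.sum_sub_distrib]
            refine Finset.sum_congr rfl fun η _ => ?_
            rw [mul_sub, Finset.mul_sum]
            congr 1
            · exact Finset.sum_congr rfl fun j _ => by ring
            · ring
    rw [key]
    have hg : ∀ η ∈ s, f η * ((∑ j : Fin d, (GF d lam ((ζ - η) + Pi.single j 1) +
        GF d lam ((ζ - η) - Pi.single j 1))) - lam * GF d lam (ζ - η))
        = if η = ζ then f η else 0 := by
      intro η _
      rw [green d lam hδ0 hδ (ζ - η)]
      by_cases hη : η = ζ
      · rw [if_pos (by rw [hη, sub_self]), if_pos hη, mul_one]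
      · rw [if_neg (fun hc => hη (sub_eq_zero.mp hc).symm), if_neg hη, mul_zero]
    rw [Finset.sum_congr rfl hg, Finset.sum_ite_eq' s ζ (fun η => f η)]
    by_cases hζ : ζ ∈ s
    · rw [if_pos hζ]
    · rw [if_neg hζ]
      have : f ζ = 0 := by
        by_contra hne
        exact hζ (hf.mem_toFinset.mpr hne)
      rw [this]
  have hψΨ : ψ = Ψ := by
    obtain ⟨u, hu⟩ := hunit
    have h1 : (Δ - lam • 1) ψ = (Δ - lam • 1) Ψ := by rw [hψ, happ]
    have h2 : (↑u⁻¹ : lp (fun _ : (Fin d → ℤ) => ℂ) 2 →L[ℂ] lp (fun _ : (Fin d → ℤ) => ℂ) 2)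
        ((Δ - lam • 1) ψ) =
        (↑u⁻¹ : lp (fun _ : (Fin d → ℤ) => ℂ) 2 →L[ℂ] lp (fun _ : (Fin d → ℤ) => ℂ) 2)
        ((Δ - lam • 1) Ψ) := by rw [h1]
    rw [← hu, ← ContinuousLinearMap.mul_apply, ← ContinuousLinearMap.mul_apply, u.inv_mul,
      ContinuousLinearMap.one_apply, ContinuousLinearMap.one_apply] at h2
    exact h2
  rw [hψΨ, hΨap ξ]
  -- now evaluate the right-hand side
  have hIη : ∀ η : Fin d → ℤ, IntegrableOn
      (fun k => f η * (eI d (ξ - η) k * hinv d lam k)) (Box d) volume := fun η =>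
    (intOn d _ ((eI_cont d _).mul (hinv_cont d lam hδ0 hδ))).const_mul _
  have hpt : ∀ k : Fin d → ℝ,
      (∑ᶠ η : Fin d → ℤ,
        f η * Complex.exp (Complex.I * ↑(∑ j, k j * ((ξ j : ℝ) - (η j : ℝ))))) /
          ((2 * ∑ j, Real.cos (k j) : ℝ) - lam)
      = ∑ η ∈ s, f η * (eI d (ξ - η) k * hinv d lam k) := by
    intro k
    have hsupp : (Function.support fun η : Fin d → ℤ =>
        f η * Complex.exp (Complex.I * ↑(∑ j, k j * ((ξ j : ℝ) - (η j : ℝ))))) ⊆ ↑s := by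
      intro η hη
      rw [Function.mem_support] at hη
      have : f η ≠ 0 := fun hc => hη (by rw [hc, zero_mul])
      exact hf.mem_toFinset.mpr this
    rw [finsum_eq_sum_of_support_subset _ hsupp, Finset.sum_div]
    refine Finset.sum_congr rfl fun η _ => ?_
    rw [div_eq_mul_inv, mul_assoc]
    have harg : (∑ j, k j * ((ξ j : ℝ) - (η j : ℝ))) = ∑ j, k j * (((ξ - η) j : ℤ) : ℝ) :=
      Finset.sum_congr rfl fun j _ => by rw [Pi.sub_apply]; push_cast; ring
    simp only [eI, hinv, hden]
    rw [harg]
  calc (∑ η ∈ s, f η * GF d lam (ξ - η))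
      = ((2 * Real.pi : ℂ) ^ d)⁻¹ *
        ∑ η ∈ s, ∫ k in Box d, f η * (eI d (ξ - η) k * hinv d lam k) := by
        rw [Finset.mul_sum]
        refine Finset.sum_congr rfl fun η _ => ?_
        rw [integral_const_mul, GF]
        ring
    _ = ((2 * Real.pi : ℂ) ^ d)⁻¹ *
        ∫ k in Box d, ∑ η ∈ s, f η * (eI d (ξ - η) k * hinv d lam k) := by
        rw [integral_finset_sum _ fun η _ => hIη η]
    _ = ((2 * Real.pi : ℂ) ^ d)⁻¹ *
        ∫ k in Set.Icc (fun _ : Fin d => -Real.pi) (fun _ => Real.pi),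
          (∑ᶠ η : Fin d → ℤ,
              f η * Complex.exp (Complex.I * ↑(∑ j, k j * ((ξ j : ℝ) - (η j : ℝ))))) /
            ((2 * ∑ j, Real.cos (k j) : ℝ) - lam) := by
        congr 1
        exact (setIntegral_congr_fun measurableSet_Icc fun k _ => hpt k).symm
end
end

section
/- Let d = 2 and λ ∈ (0, 4). Then for every k = (k₁,k₂) ∈ ℝ² with 2(cos k₁ + cos k₂) = λ, one has cos k₁ · sin²k₂ + sin²k₁ · cos k₂ > 0; in particular the curvature K(k) = (cos k₁ sin²k₂ + sin²k₁ cos k₂)/(sin²k₁ + sin²k₂)^{3/2} of the level curve Γ(λ) is strictly positive at every point. -/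
/- STATEMENT 8: Let d = 2 and λ ∈ (0,4).  For every k = (k₁,k₂) ∈ ℝ² with
2(cos k₁ + cos k₂) = λ one has cos k₁ sin²k₂ + sin²k₁ cos k₂ > 0; in particular the
curvature K(k) = (cos k₁ sin²k₂ + sin²k₁ cos k₂)/(sin²k₁ + sin²k₂)^{3/2} of the level
curve Γ(λ) is strictly positive at every point. -/

theorem curvature_positive_d2 (lam : ℝ) (hlam : lam ∈ Set.Ioo (0 : ℝ) 4)
    (k₁ k₂ : ℝ) (hk : 2 * (Real.cos k₁ + Real.cos k₂) = lam) :
    0 < Real.cos k₁ * Real.sin k₂ ^ 2 + Real.sin k₁ ^ 2 * Real.cos k₂ ∧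
    0 < (Real.cos k₁ * Real.sin k₂ ^ 2 + Real.sin k₁ ^ 2 * Real.cos k₂) /
        (Real.sin k₁ ^ 2 + Real.sin k₂ ^ 2) ^ ((3 : ℝ) / 2) := by
  obtain ⟨h0, h4⟩ := hlam
  set a := Real.cos k₁ with ha
  set b := Real.cos k₂ with hb
  have ha1 : a ≤ 1 := Real.cos_le_one k₁
  have ha1' : -1 ≤ a := Real.neg_one_le_cos k₁
  have hb1 : b ≤ 1 := Real.cos_le_one k₂
  have hb1' : -1 ≤ b := Real.neg_one_le_cos k₂
  have hsum0 : 0 < a + b := by nlinarith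
  have hsum2 : a + b < 2 := by nlinarith
  have hab : a * b < 1 := by nlinarith [sq_nonneg (a - b), sq_nonneg (a + b)]
  have hs1 : Real.sin k₁ ^ 2 = 1 - a ^ 2 := by
    rw [ha]; nlinarith [Real.sin_sq_add_cos_sq k₁]
  have hs2 : Real.sin k₂ ^ 2 = 1 - b ^ 2 := by
    rw [hb]; nlinarith [Real.sin_sq_add_cos_sq k₂]
  have hE : 0 < a * Real.sin k₂ ^ 2 + Real.sin k₁ ^ 2 * b := by
    rw [hs1, hs2]
    have : a * (1 - b ^ 2) + (1 - a ^ 2) * b = (a + b) * (1 - a * b) := by ring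
    rw [this]
    exact mul_pos hsum0 (by linarith)
  refine ⟨hE, div_pos hE ?_⟩
  apply Real.rpow_pos_of_pos
  rw [hs1, hs2]
  nlinarith [sq_nonneg (a - b), sq_nonneg (a + b), sq_nonneg (1 - a*b)]
end

section
/- Let d = 3 and λ ∈ (2, 6). Then for every k = (k₁,k₂,k₃) ∈ ℝ³ with 2(cos k₁ + cos k₂ + cos k₃) = λ, one has cos k₁ cos k₂ sin²k₃ + cos k₁ cos k₃ sin²k₂ + cos k₂ cos k₃ sin²k₁ > 0; in particular the total (Gaussian) curvature of the level surface Γ(λ) is strictly positive at every point. -/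
lemma key_neg (a b c : ℝ) (ha' : a ≤ 1) (hb' : b ≤ 1) (hc' : c ≤ 1)
    (hcneg : c ≤ 0) (hs : 1 < a + b + c) :
    0 < a*b*(1-c^2) + a*c*(1-b^2) + b*c*(1-a^2) := by
  have hab : 0 ≤ (1-a)*(1-b) := mul_nonneg (by linarith) (by linarith)
  have hc1 : 0 < 1 + c := by nlinarith
  have habp : 0 < a + b := by linarith
  nlinarith [mul_nonneg hab (by nlinarith : (0:ℝ) ≤ 1 - c^2),
    mul_nonneg (mul_nonneg (by linarith : (0:ℝ) ≤ -c) habp.le) hab,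
    mul_pos (by linarith : (0:ℝ) < a + b + c - 1)
      (by nlinarith : (0:ℝ) < 1 + c - c*(a+b))]

lemma key (a b c : ℝ) (ha : -1 ≤ a) (ha' : a ≤ 1) (hb : -1 ≤ b) (hb' : b ≤ 1)
    (hc : -1 ≤ c) (hc' : c ≤ 1) (hs : 1 < a + b + c) (hs3 : a + b + c < 3) :
    0 < a*b*(1-c^2) + a*c*(1-b^2) + b*c*(1-a^2) := by
  rcases le_or_gt a 0 with h | ha0
  · have := key_neg b c a hb' hc' ha' h (by linarith)
    linarith [this]
  rcases le_or_gt b 0 with h | hb0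
  · have := key_neg a c b ha' hc' hb' h (by linarith)
    nlinarith [this]
  rcases le_or_gt c 0 with h | hc0
  · exact key_neg a b c ha' hb' hc' h hs
  · have habc : 0 < a*b*c := by positivity
    nlinarith [mul_nonneg (mul_nonneg (mul_nonneg ha0.le hb0.le) (by linarith : (0:ℝ) ≤ 1-c)) (by nlinarith : (0:ℝ) ≤ 1-c^2),
      mul_nonneg (mul_nonneg (mul_nonneg ha0.le hc0.le) (by linarith : (0:ℝ) ≤ 1-b)) (by nlinarith : (0:ℝ) ≤ 1-b^2),
      mul_nonneg (mul_nonneg (mul_nonneg hb0.le hc0.le) (by linarith : (0:ℝ) ≤ 1-a)) (by nlinarith : (0:ℝ) ≤ 1-a^2),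
      mul_pos habc (by linarith : (0:ℝ) < 3-(a+b+c)),
      mul_nonneg habc.le (by nlinarith : (0:ℝ) ≤ a-a^2),
      mul_nonneg habc.le (by nlinarith : (0:ℝ) ≤ b-b^2),
      mul_nonneg habc.le (by nlinarith : (0:ℝ) ≤ c-c^2)]

/- STATEMENT 9: Let d = 3 and λ ∈ (2,6).  For every k = (k₁,k₂,k₃) ∈ ℝ³ with
2(cos k₁ + cos k₂ + cos k₃) = λ one has
cos k₁ cos k₂ sin²k₃ + cos k₁ cos k₃ sin²k₂ + cos k₂ cos k₃ sin²k₁ > 0; in particular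
the total (Gaussian) curvature
K(k) = (numerator)/(sin²k₁ + sin²k₂ + sin²k₃)² of Γ(λ) is strictly positive. -/

theorem curvature_positive_d3 (lam : ℝ) (hlam : lam ∈ Set.Ioo (2 : ℝ) 6)
    (k₁ k₂ k₃ : ℝ) (hk : 2 * (Real.cos k₁ + Real.cos k₂ + Real.cos k₃) = lam) :
    0 < Real.cos k₁ * Real.cos k₂ * Real.sin k₃ ^ 2 +
        Real.cos k₁ * Real.cos k₃ * Real.sin k₂ ^ 2 +
        Real.cos k₂ * Real.cos k₃ * Real.sin k₁ ^ 2 ∧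
    0 < (Real.cos k₁ * Real.cos k₂ * Real.sin k₃ ^ 2 +
        Real.cos k₁ * Real.cos k₃ * Real.sin k₂ ^ 2 +
        Real.cos k₂ * Real.cos k₃ * Real.sin k₁ ^ 2) /
        (Real.sin k₁ ^ 2 + Real.sin k₂ ^ 2 + Real.sin k₃ ^ 2) ^ 2 := by
  obtain ⟨h2, h6⟩ := hlam
  have hs1 : Real.sin k₁ ^ 2 = 1 - Real.cos k₁ ^ 2 := Real.sin_sq k₁
  have hs2 : Real.sin k₂ ^ 2 = 1 - Real.cos k₂ ^ 2 := Real.sin_sq k₂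
  have hs3 : Real.sin k₃ ^ 2 = 1 - Real.cos k₃ ^ 2 := Real.sin_sq k₃
  have hE : 0 < Real.cos k₁ * Real.cos k₂ * Real.sin k₃ ^ 2 +
      Real.cos k₁ * Real.cos k₃ * Real.sin k₂ ^ 2 +
      Real.cos k₂ * Real.cos k₃ * Real.sin k₁ ^ 2 := by
    rw [hs1, hs2, hs3]
    exact key _ _ _ (Real.neg_one_le_cos k₁) (Real.cos_le_one k₁)
      (Real.neg_one_le_cos k₂) (Real.cos_le_one k₂)
      (Real.neg_one_le_cos k₃) (Real.cos_le_one k₃) (by linarith) (by linarith)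
  refine ⟨hE, div_pos hE ?_⟩
  have hd : 0 < Real.sin k₁ ^ 2 + Real.sin k₂ ^ 2 + Real.sin k₃ ^ 2 := by
    by_contra h
    push_neg at h
    have n1 := sq_nonneg (Real.sin k₁)
    have n2 := sq_nonneg (Real.sin k₂)
    have n3 := sq_nonneg (Real.sin k₃)
    have e1 : Real.sin k₁ ^ 2 = 0 := by linarith
    have e2 : Real.sin k₂ ^ 2 = 0 := by linarith
    have e3 : Real.sin k₃ ^ 2 = 0 := by linarith
    rw [e1, e2, e3] at hE
    simp at hE
  positivity
end

section
/- Let d ≥ 1 and let λ ∈ ℝ with 2d − 4 < λ < 2d. Then the superlevel set {k ∈ [−π,π]^d : φ(k) ≥ λ} is a convex subset of ℝ^d; in particular the level surface Γ(λ) bounds a convex body. -/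
/- STATEMENT 10: Let d ≥ 1 and λ ∈ ℝ with 2d − 4 < λ < 2d.  Then the superlevel set
{k ∈ [−π,π]^d : φ(k) ≥ λ} (φ(k) = 2∑ cos k_j) is a convex subset of ℝ^d; in
particular the level surface Γ(λ) bounds a convex body. -/

open Filter Topology

lemma convex_of_isClosed_midpoint {E : Type*} [NormedAddCommGroup E] [NormedSpace ℝ E]
    {s : Set E} (hs : IsClosed s)
    (hm : ∀ x ∈ s, ∀ y ∈ s, (1/2 : ℝ) • x + (1/2 : ℝ) • y ∈ s) : Convex ℝ s := by
  intro x hx y hy a b ha hb hab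
  set f : ℝ → E := fun θ => (1 - θ) • x + θ • y with hf
  have hfc : Continuous f := by
    apply Continuous.add
    · exact (continuous_const.sub continuous_id).smul continuous_const
    · exact continuous_id.smul continuous_const
  -- dyadic points are in s
  have hdy : ∀ n : ℕ, ∀ k : ℕ, k ≤ 2 ^ n → f ((k : ℝ) / 2 ^ n) ∈ s := by
    intro n
    induction n with
    | zero =>
      intro k hk
      interval_cases k
      · simpa [hf] using hx
      · simpa [hf] using hy
    | succ n ih =>
      intro k hk
      have h1 : min k (2 ^ n) ≤ 2 ^ n := min_le_right _ _
      have h2 : k - min k (2 ^ n) ≤ 2 ^ n := by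
        rcases le_or_gt k (2 ^ n) with h | h
        · simp [min_eq_left h]
        · rw [min_eq_right h.le]
          omega
      have e1 := ih _ h1
      have e2 := ih _ h2
      have := hm _ e1 _ e2
      have hkeq : ((k : ℝ) / 2 ^ (n+1)) =
          (((min k (2 ^ n) : ℕ) : ℝ) / 2 ^ n) / 2 + (((k - min k (2 ^ n) : ℕ) : ℝ) / 2 ^ n) / 2 := by
        have : ((k - min k (2 ^ n) : ℕ) : ℝ) = (k : ℝ) - ((min k (2 ^ n) : ℕ) : ℝ) := by
          have : min k (2 ^ n) ≤ k := min_le_left _ _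
          push_cast [Nat.cast_sub this]
          ring
        rw [this]
        ring
      have hmidf : ∀ θ₁ θ₂ : ℝ, f (θ₁ / 2 + θ₂ / 2) = (1/2 : ℝ) • f θ₁ + (1/2 : ℝ) • f θ₂ := by
        intro θ₁ θ₂
        simp only [hf]
        module
      rw [hkeq, hmidf]
      exact this
  -- now approximate
  have key : ∀ θ : ℝ, θ ∈ Set.Icc (0:ℝ) 1 → f θ ∈ s := by
    intro θ hθ
    have hseq : Tendsto (fun n : ℕ => ((⌊θ * 2 ^ n⌋₊ : ℝ) / 2 ^ n)) atTop (𝓝 θ) := by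
      have h1 : ∀ n : ℕ, |((⌊θ * 2 ^ n⌋₊ : ℝ) / 2 ^ n) - θ| ≤ 1 / 2 ^ n := by
        intro n
        have hp : (0:ℝ) < 2 ^ n := by positivity
        have h0 : 0 ≤ θ * 2 ^ n := mul_nonneg hθ.1 hp.le
        have hfl : (⌊θ * 2 ^ n⌋₊ : ℝ) ≤ θ * 2 ^ n := Nat.floor_le h0
        have hfl2 : θ * 2 ^ n < (⌊θ * 2 ^ n⌋₊ : ℝ) + 1 := Nat.lt_floor_add_one _
        have h3 : (⌊θ * 2 ^ n⌋₊ : ℝ) / 2 ^ n ≤ θ := by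
          rw [div_le_iff₀ hp]; exact hfl
        rw [abs_sub_comm, abs_of_nonneg (by linarith)]
        rw [sub_le_iff_le_add, ← add_div, le_div_iff₀ hp]
        linarith
      have h2 : Tendsto (fun n : ℕ => (1:ℝ) / 2 ^ n) atTop (𝓝 0) := by
        have := tendsto_pow_atTop_nhds_zero_of_lt_one (by norm_num : (0:ℝ) ≤ 1/2)
          (by norm_num : (1:ℝ)/2 < 1)
        exact this.congr (fun n => by rw [div_pow, one_pow])
      rw [tendsto_iff_dist_tendsto_zero]
      refine squeeze_zero (fun n => dist_nonneg) (fun n => ?_) h2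
      rw [Real.dist_eq]
      exact h1 n
    have hmem : ∀ n : ℕ, f ((⌊θ * 2 ^ n⌋₊ : ℝ) / 2 ^ n) ∈ s := by
      intro n
      apply hdy
      have : θ * 2 ^ n ≤ 2 ^ n := by
        have hp : (0:ℝ) < 2 ^ n := by positivity
        nlinarith [hθ.2]
      calc ⌊θ * 2 ^ n⌋₊ ≤ ⌊((2:ℝ) ^ n)⌋₊ := Nat.floor_mono this
        _ = 2 ^ n := by
          rw [show ((2:ℝ) ^ n) = ((2 ^ n : ℕ) : ℝ) by push_cast; ring]
          exact Nat.floor_natCast _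
    exact hs.mem_of_tendsto ((hfc.tendsto θ).comp hseq) (Eventually.of_forall hmem)
  have := key b ⟨hb, by linarith⟩
  have hx1 : (1 : ℝ) - b = a := by linarith
  simpa [hf, hx1] using this

open Real Finset

lemma cs_two {p q r s : ℝ} (hp : 0 ≤ p) (hq : 0 ≤ q) (hr : 0 ≤ r) (hs : 0 ≤ s) :
    √p * √q + √r * √s ≤ √(p + r) * √(q + s) := by
  have h := Real.sum_sqrt_mul_sqrt_le (Finset.univ : Finset (Fin 2))
    (f := ![p, r]) (g := ![q, s]) ?_ ?_
  · simpa [Fin.sum_univ_two] using h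
  · intro i; fin_cases i <;> simpa
  · intro i; fin_cases i <;> simpa

lemma key_midpoint (d : ℕ) (a b : Fin d → ℝ) (c : ℝ)
    (ha : ∀ j, a j ∈ Set.Icc (0:ℝ) (π/2)) (hb : ∀ j, b j ∈ Set.Icc (0:ℝ) (π/2))
    (hc : c ≤ 1)
    (hA : ∑ j, Real.sin (a j) ^ 2 ≤ c) (hB : ∑ j, Real.sin (b j) ^ 2 ≤ c) :
    ∑ j, Real.sin ((a j + b j) / 2) ^ 2 ≤ c := by
  set e : Fin d → ℝ := fun j => Real.sin (a j) with he
  set f : Fin d → ℝ := fun j => Real.sin (b j) with hf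
  have he0 : ∀ j, 0 ≤ e j := fun j =>
    Real.sin_nonneg_of_nonneg_of_le_pi (ha j).1 (by linarith [(ha j).2, Real.pi_pos])
  have hf0 : ∀ j, 0 ≤ f j := fun j =>
    Real.sin_nonneg_of_nonneg_of_le_pi (hb j).1 (by linarith [(hb j).2, Real.pi_pos])
  have hca : ∀ j, 0 ≤ Real.cos (a j) := fun j =>
    Real.cos_nonneg_of_mem_Icc ⟨by linarith [(ha j).1, Real.pi_pos], (ha j).2⟩
  have hcb : ∀ j, 0 ≤ Real.cos (b j) := fun j =>
    Real.cos_nonneg_of_mem_Icc ⟨by linarith [(hb j).1, Real.pi_pos], (hb j).2⟩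
  set A : ℝ := ∑ j, e j ^ 2 with hAdef
  set B : ℝ := ∑ j, f j ^ 2 with hBdef
  have hA0 : 0 ≤ A := Finset.sum_nonneg fun j _ => sq_nonneg _
  have hB0 : 0 ≤ B := Finset.sum_nonneg fun j _ => sq_nonneg _
  have hA1 : A ≤ 1 := le_trans hA hc
  have hB1 : B ≤ 1 := le_trans hB hc
  set E : ℝ := √(1 - A) with hEdef
  set F : ℝ := √(1 - B) with hFdef
  have hE0 : 0 ≤ E := Real.sqrt_nonneg _
  have hF0 : 0 ≤ F := Real.sqrt_nonneg _
  have hE2 : E ^ 2 = 1 - A := Real.sq_sqrt (by linarith)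
  have hF2 : F ^ 2 = 1 - B := Real.sq_sqrt (by linarith)
  set S : ℝ := (∑ j, e j * f j) + E * F with hSdef
  have hejA : ∀ j, e j ^ 2 ≤ A :=
    fun j => Finset.single_le_sum (f := fun k => e k ^ 2) (fun i _ => sq_nonneg _) (mem_univ j)
  have hfjB : ∀ j, f j ^ 2 ≤ B :=
    fun j => Finset.single_le_sum (f := fun k => f k ^ 2) (fun i _ => sq_nonneg _) (mem_univ j)
  -- Step 1 : S ≤ cos (a j - b j)
  have hstep1 : ∀ j, S ≤ Real.cos (a j - b j) := by
    intro j
    rw [Real.cos_sub]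
    have hA' : ∑ k ∈ Finset.univ.erase j, e k ^ 2 = A - e j ^ 2 := by
      rw [Finset.sum_erase_eq_sub (mem_univ j), ← hAdef]
    have hB' : ∑ k ∈ Finset.univ.erase j, f k ^ 2 = B - f j ^ 2 := by
      rw [Finset.sum_erase_eq_sub (mem_univ j), ← hBdef]
    have h1 : ∑ k ∈ Finset.univ.erase j, e k * f k ≤ √(A - e j ^ 2) * √(B - f j ^ 2) := by
      have h := Real.sum_mul_le_sqrt_mul_sqrt (Finset.univ.erase j) e f
      rwa [hA', hB'] at h
    have h2 : √(A - e j ^ 2) * √(B - f j ^ 2) + E * F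
        ≤ √(1 - e j ^ 2) * √(1 - f j ^ 2) := by
      have h := cs_two (p := A - e j ^ 2) (q := B - f j ^ 2) (r := 1 - A) (s := 1 - B)
        (by linarith [hejA j]) (by linarith [hfjB j]) (by linarith) (by linarith)
      have e1 : A - e j ^ 2 + (1 - A) = 1 - e j ^ 2 := by ring
      have e2 : B - f j ^ 2 + (1 - B) = 1 - f j ^ 2 := by ring
      rwa [e1, e2] at h
    have h3 : √(1 - e j ^ 2) = Real.cos (a j) := by
      rw [show (1:ℝ) - e j ^ 2 = Real.cos (a j) ^ 2 from by
        simp only [he]; rw [Real.cos_sq']]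
      exact Real.sqrt_sq (hca j)
    have h4 : √(1 - f j ^ 2) = Real.cos (b j) := by
      rw [show (1:ℝ) - f j ^ 2 = Real.cos (b j) ^ 2 from by
        simp only [hf]; rw [Real.cos_sq']]
      exact Real.sqrt_sq (hcb j)
    have h5 : ∑ k, e k * f k = (∑ k ∈ Finset.univ.erase j, e k * f k) + e j * f j :=
      (Finset.sum_erase_add _ _ (mem_univ j)).symm
    rw [h3, h4] at h2
    have : S = (∑ k ∈ Finset.univ.erase j, e k * f k) + e j * f j + E * F := by
      rw [hSdef, h5]
    rw [this]
    have heq : e j * f j = Real.sin (a j) * Real.sin (b j) := by simp [he, hf]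
    linarith [h1, h2]
  -- S bounds
  have hS0 : 0 ≤ S := by
    apply add_nonneg
    · exact Finset.sum_nonneg fun j _ => mul_nonneg (he0 j) (hf0 j)
    · exact mul_nonneg hE0 hF0
  have hS1 : S ≤ 1 := by
    have h1 : ∑ k, e k * f k ≤ √A * √B := by
      have h := Real.sum_mul_le_sqrt_mul_sqrt Finset.univ e f
      rwa [← hAdef, ← hBdef] at h
    have h2 : √A * √B + E * F ≤ √(A + (1 - A)) * √(B + (1 - B)) :=
      cs_two hA0 hB0 (by linarith) (by linarith)
    have e1 : A + (1 - A) = 1 := by ring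
    have e2 : B + (1 - B) = 1 := by ring
    rw [e1, e2, Real.sqrt_one, one_mul] at h2
    linarith
  -- Step 3 : per-coordinate
  have hstep3 : ∀ j, Real.sin ((a j + b j) / 2) ^ 2 * (2 + 2 * S) ≤ (e j + f j) ^ 2 := by
    intro j
    have hss : e j + f j = 2 * Real.sin ((a j + b j) / 2) * Real.cos ((a j - b j) / 2) := by
      have h1 := Real.sin_add ((a j + b j) / 2) ((a j - b j) / 2)
      have h2 := Real.sin_sub ((a j + b j) / 2) ((a j - b j) / 2)
      have e1 : (a j + b j) / 2 + (a j - b j) / 2 = a j := by ring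
      have e2 : (a j + b j) / 2 - (a j - b j) / 2 = b j := by ring
      rw [e1] at h1; rw [e2] at h2
      simp only [he, hf]
      rw [h1, h2]; ring
    have hcsq : Real.cos ((a j - b j) / 2) ^ 2 = (1 + Real.cos (a j - b j)) / 2 := by
      have h := Real.cos_two_mul ((a j - b j) / 2)
      rw [show 2 * ((a j - b j) / 2) = a j - b j from by ring] at h
      linarith
    have h6 : (e j + f j) ^ 2 = 2 * Real.sin ((a j + b j) / 2) ^ 2
        * (1 + Real.cos (a j - b j)) := by
      rw [hss]; rw [mul_pow, mul_pow]; rw [hcsq]; ring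
    nlinarith [sq_nonneg (Real.sin ((a j + b j) / 2)), hstep1 j]
  have hsum3 : (∑ j, Real.sin ((a j + b j) / 2) ^ 2) * (2 + 2 * S) ≤ ∑ j, (e j + f j) ^ 2 := by
    rw [Finset.sum_mul]
    exact Finset.sum_le_sum fun j _ => hstep3 j
  have hexp : ∑ j, (e j + f j) ^ 2 = A + B + 2 * (S - E * F) := by
    have h1 : ∀ j : Fin d, (e j + f j) ^ 2 = e j ^ 2 + 2 * (e j * f j) + f j ^ 2 :=
      fun j => by ring
    rw [Finset.sum_congr rfl fun j _ => h1 j]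
    rw [Finset.sum_add_distrib, Finset.sum_add_distrib, ← Finset.mul_sum]
    rw [hSdef, ← hAdef, ← hBdef]
    ring
  -- final bound
  have h1c : (0:ℝ) ≤ 1 - c := by linarith
  have hE' : √(1 - c) ≤ E := Real.sqrt_le_sqrt (by linarith)
  have hF' : √(1 - c) ≤ F := Real.sqrt_le_sqrt (by linarith)
  have hEF : 1 - c ≤ E * F := by
    calc 1 - c = √(1 - c) * √(1 - c) := (Real.mul_self_sqrt h1c).symm
      _ ≤ E * F := mul_le_mul hE' hF' (Real.sqrt_nonneg _) hE0
  have hprod : 0 ≤ (1 - c) * (1 - S) := mul_nonneg h1c (by linarith)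
  have hfinal : A + B + 2 * (S - E * F) ≤ (2 + 2 * S) * c := by nlinarith [hE2, hF2]
  have hpos : (0:ℝ) < 2 + 2 * S := by linarith
  have h7 : (∑ j, Real.sin ((a j + b j) / 2) ^ 2) * (2 + 2 * S) ≤ (2 + 2 * S) * c := by
    calc (∑ j, Real.sin ((a j + b j) / 2) ^ 2) * (2 + 2 * S)
        ≤ ∑ j, (e j + f j) ^ 2 := hsum3
      _ = A + B + 2 * (S - E * F) := hexp
      _ ≤ (2 + 2 * S) * c := hfinal
  exact le_of_mul_le_mul_right (by linarith) hpos

section helpers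
variable {d : ℕ}

lemma cos_eq_one_sub_two_sin_sq_half (x : ℝ) :
    Real.cos x = 1 - 2 * Real.sin (x / 2) ^ 2 := by
  have h := Real.cos_two_mul' (x / 2)
  rw [show 2 * (x / 2) = x from by ring] at h
  rw [h, Real.cos_sq']; ring

lemma sin_abs_sq (t : ℝ) : Real.sin |t| ^ 2 = Real.sin t ^ 2 := by
  rcases abs_cases t with ⟨h, _⟩ | ⟨h, _⟩
  · rw [h]
  · rw [h, Real.sin_neg]; ring

lemma sum_cos_eq (k : Fin d → ℝ) :
    ∑ j, Real.cos (k j) = (d : ℝ) - 2 * ∑ j, Real.sin (k j / 2) ^ 2 := by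
  rw [Finset.sum_congr rfl fun j _ => cos_eq_one_sub_two_sin_sq_half (k j)]
  rw [Finset.sum_sub_distrib, ← Finset.mul_sum]
  simp

end helpers

theorem superlevel_set_convex (d : ℕ) (hd : 1 ≤ d) (lam : ℝ)
    (h1 : 2 * (d : ℝ) - 4 < lam) (h2 : lam < 2 * (d : ℝ)) :
    Convex ℝ {k : Fin d → ℝ | (∀ j, |k j| ≤ Real.pi) ∧ lam ≤ 2 * ∑ j, Real.cos (k j)} := by
  set c : ℝ := (2 * (d : ℝ) - lam) / 4 with hcdef
  have hc1 : c < 1 := by rw [hcdef]; linarith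
  have hc0 : 0 < c := by rw [hcdef]; linarith
  -- translation between the two formulations
  have htrans : ∀ k : Fin d → ℝ,
      (lam ≤ 2 * ∑ j, Real.cos (k j)) ↔ (∑ j, Real.sin (k j / 2) ^ 2 ≤ c) := by
    intro k
    rw [sum_cos_eq k, hcdef]
    constructor <;> intro h <;> linarith
  apply convex_of_isClosed_midpoint
  · -- closedness
    have heq : {k : Fin d → ℝ | (∀ j, |k j| ≤ Real.pi) ∧ lam ≤ 2 * ∑ j, Real.cos (k j)}
        = (⋂ j, {k : Fin d → ℝ | |k j| ≤ Real.pi}) ∩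
          {k : Fin d → ℝ | lam ≤ 2 * ∑ j, Real.cos (k j)} := by
      ext k; simp [Set.mem_iInter]
    rw [heq]
    refine IsClosed.inter (isClosed_iInter fun j => ?_) ?_
    · exact isClosed_le ((continuous_apply j).abs) continuous_const
    · exact isClosed_le continuous_const
        (continuous_const.mul (continuous_finset_sum _ fun j _ =>
          Real.continuous_cos.comp (continuous_apply j)))
  · -- midpoint convexity
    rintro x ⟨hx1, hx2⟩ y ⟨hy1, hy2⟩
    have hm : ∀ j, ((1/2 : ℝ) • x + (1/2 : ℝ) • y) j = (x j + y j) / 2 := by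
      intro j; simp [Pi.smul_apply, smul_eq_mul]; ring
    constructor
    · intro j
      rw [hm j]
      calc |(x j + y j) / 2| = |x j + y j| / 2 := by rw [abs_div, abs_two]
        _ ≤ (|x j| + |y j|) / 2 := by linarith [abs_add_le (x j) (y j)]
        _ ≤ Real.pi := by
            have := hx1 j; have := hy1 j; linarith
    · rw [htrans]
      have hX := (htrans x).1 hx2
      have hY := (htrans y).1 hy2
      set a : Fin d → ℝ := fun j => |x j| / 2 with hadef
      set b : Fin d → ℝ := fun j => |y j| / 2 with hbdef
      have hXa : ∑ j, Real.sin (a j) ^ 2 ≤ c := by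
        have : ∀ j : Fin d, Real.sin (a j) ^ 2 = Real.sin (x j / 2) ^ 2 := by
          intro j
          simp only [hadef]
          rw [show |x j| / 2 = |x j / 2| from by rw [abs_div, abs_two]]
          exact sin_abs_sq _
        rw [Finset.sum_congr rfl fun j _ => this j]
        exact hX
      have hYb : ∑ j, Real.sin (b j) ^ 2 ≤ c := by
        have : ∀ j : Fin d, Real.sin (b j) ^ 2 = Real.sin (y j / 2) ^ 2 := by
          intro j
          simp only [hbdef]
          rw [show |y j| / 2 = |y j / 2| from by rw [abs_div, abs_two]]
          exact sin_abs_sq _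
        rw [Finset.sum_congr rfl fun j _ => this j]
        exact hY
      have hkey := key_midpoint d a b c
        (fun j => ⟨by simp only [hadef]; positivity,
          by simp only [hadef]; have := hx1 j; linarith⟩)
        (fun j => ⟨by simp only [hbdef]; positivity,
          by simp only [hbdef]; have := hy1 j; linarith⟩)
        hc1.le hXa hYb
      -- compare midpoint coordinates
      have hcomp : ∀ j : Fin d,
          Real.sin (((1/2 : ℝ) • x + (1/2 : ℝ) • y) j / 2) ^ 2
            ≤ Real.sin ((a j + b j) / 2) ^ 2 := by
        intro j
        rw [hm j]
        have habs : |(x j + y j) / 2 / 2| ≤ (a j + b j) / 2 := by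
          have h4 : |(x j + y j) / 2 / 2| = |x j + y j| / 4 := by
            rw [show (x j + y j) / 2 / 2 = (x j + y j) / 4 from by ring, abs_div]
            norm_num
          rw [h4]; simp only [hadef, hbdef]
          linarith [abs_add_le (x j) (y j)]
        have hub : (a j + b j) / 2 ≤ π / 2 := by
          have := hx1 j; have := hy1 j
          simp only [hadef, hbdef]; linarith
        have h0 : 0 ≤ Real.sin |(x j + y j) / 2 / 2| :=
          Real.sin_nonneg_of_nonneg_of_le_pi (abs_nonneg _)
            (by have := Real.pi_pos; linarith [habs.trans hub])
        have hle : Real.sin |(x j + y j) / 2 / 2| ≤ Real.sin ((a j + b j) / 2) :=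
          Real.sin_le_sin_of_le_of_le_pi_div_two (by linarith [abs_nonneg ((x j + y j)/2/2), Real.pi_pos]) hub habs
        calc Real.sin ((x j + y j) / 2 / 2) ^ 2 = Real.sin |(x j + y j) / 2 / 2| ^ 2 :=
              (sin_abs_sq _).symm
          _ ≤ Real.sin ((a j + b j) / 2) ^ 2 := by
              exact pow_le_pow_left₀ h0 hle 2
        done
      calc ∑ j, Real.sin (((1/2 : ℝ) • x + (1/2 : ℝ) • y) j / 2) ^ 2
          ≤ ∑ j, Real.sin ((a j + b j) / 2) ^ 2 := Finset.sum_le_sum fun j _ => hcomp j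
        _ ≤ c := hkey
end

section
/- Let n ≥ 1, let 0 < b₁ < b₂ < … < b_n, let a₁, …, a_n, c ∈ ℝ, and define f(x) = ∑_{j=1}^n a_j √(1 − b_j x) + c for x ∈ (−∞, 1/b_n]. If f is not identically zero, then f has at most n zeros in (−∞, 1/b_n]. -/
open Finset Set

lemma aux_pos {β B x : ℝ} (hβ : 0 < β) (hβB : β ≤ B) (hx : x < 1 / B) : 0 < 1 - β * x := by
  have hB : 0 < B := lt_of_lt_of_le hβ hβB
  have hBx : x * B < 1 := (lt_div_iff₀ hB).mp hx
  rcases le_or_gt 0 x with h | h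
  · nlinarith
  · nlinarith

lemma key_lemma : ∀ (m : ℕ) (α : ℝ), α < 0 → ∀ (b d : Fin (m+1) → ℝ), (∀ j, 0 < b j) →
    StrictMono b → (∃ j, d j ≠ 0) → ∀ x : Fin (m+1) → ℝ, StrictMono x →
    (∀ i, x i < 1 / b (Fin.last m)) →
    ¬ (∀ i, ∑ j, d j * (1 - b j * x i) ^ α = 0) := by
  intro m
  induction m with
  | zero =>
    intro α hα b d hbpos hb hd x hx hlt hz
    obtain ⟨j, hj⟩ := hd
    have h0 := hz 0
    rw [Fin.sum_univ_one] at h0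
    have hs : 0 < 1 - b 0 * x 0 := aux_pos (hbpos 0) le_rfl (hlt 0)
    have : d 0 = 0 := by
      rcases mul_eq_zero.mp h0 with h | h
      · exact h
      · exact absurd h (Real.rpow_pos_of_pos hs α).ne'
    exact hj (by rwa [Fin.fin_one_eq_zero j])
  | succ k ih =>
    intro α hα b d hbpos hb hd x hx hlt hz
    set B := b (Fin.last (k+1)) with hBdef
    have hsub : ∀ z : ℝ, z < 1/B → ∀ j, 0 < 1 - b j * z :=
      fun z hzlt j => aux_pos (hbpos j) (hb.monotone (Fin.le_last j)) hzlt
    by_cases hcas : ∃ j : Fin (k+1), d j.castSucc ≠ 0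
    · -- main case
      set g : ℝ → ℝ := fun z => ∑ j, d j * ((1 - b j * z) ^ α * (1 - B * z) ^ (-α)) with hgdef
      have hg_eq : ∀ z, g z = (∑ j, d j * (1 - b j * z) ^ α) * (1 - B * z) ^ (-α) := by
        intro z
        rw [hgdef, Finset.sum_mul]
        exact Finset.sum_congr rfl fun j _ => (mul_assoc _ _ _).symm
      have hgzero : ∀ i, g (x i) = 0 := fun i => by rw [hg_eq, hz i, zero_mul]
      have hderiv : ∀ z, z < 1/B → HasDerivAt g
          (∑ j, d j * (α * (B - b j) * ((1 - b j * z) ^ (α-1) * (1 - B * z) ^ (-α-1)))) z := by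
        intro z hzlt
        apply HasDerivAt.fun_sum
        intro j _
        have hs : 0 < 1 - b j * z := hsub z hzlt j
        have ht : 0 < 1 - B * z := hsub z hzlt _
        have h1 : HasDerivAt (fun z : ℝ => 1 - b j * z) (-b j) z := by
          simpa using ((hasDerivAt_id z).const_mul (b j)).const_sub 1
        have h1' : HasDerivAt (fun z : ℝ => 1 - B * z) (-B) z := by
          simpa using ((hasDerivAt_id z).const_mul B).const_sub 1
        have h2 : HasDerivAt (fun z : ℝ => (1 - b j * z) ^ α)
            (-b j * α * (1 - b j * z) ^ (α-1)) z := h1.rpow_const (Or.inl hs.ne')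
        have h3 : HasDerivAt (fun z : ℝ => (1 - B * z) ^ (-α))
            (-B * (-α) * (1 - B * z) ^ (-α-1)) z := h1'.rpow_const (Or.inl ht.ne')
        have h4 := (h2.mul h3).const_mul (d j)
        convert h4 using 1
        · rfl
        · rfl
        have e1 : (1 - B * z) ^ (-α) = (1 - B * z) ^ (-α-1) * (1 - B * z) := by
          rw [← Real.rpow_add_one ht.ne']; ring_nf
        have e2 : (1 - b j * z) ^ α = (1 - b j * z) ^ (α-1) * (1 - b j * z) := by
          rw [← Real.rpow_add_one hs.ne']; ring_nf
        rw [e1, e2]; ring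
      have hroll : ∀ i : Fin (k+1), ∃ y, y ∈ Set.Ioo (x i.castSucc) (x i.succ) ∧
          (∑ j, d j * (α * (B - b j) * ((1 - b j * y) ^ (α-1) * (1 - B * y) ^ (-α-1)))) = 0 := by
        intro i
        have hab : x i.castSucc < x i.succ := hx Fin.castSucc_lt_succ
        have hcont : ContinuousOn g (Set.Icc (x i.castSucc) (x i.succ)) := fun z hzm =>
          (hderiv z (lt_of_le_of_lt hzm.2 (hlt _))).continuousAt.continuousWithinAt
        exact exists_hasDerivAt_eq_zero hab hcont (by rw [hgzero, hgzero])
          (fun z hzm => hderiv z (lt_trans hzm.2 (hlt _)))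
      choose y hy hy0 using hroll
      have hylt : ∀ i, y i < 1/B := fun i => lt_trans (hy i).2 (hlt _)
      have hymono : StrictMono y := by
        rw [Fin.strictMono_iff_lt_succ]
        intro i
        have h1 := (hy i.castSucc).2
        have h2 := (hy i.succ).1
        rw [Fin.succ_castSucc] at h1
        linarith
      have hz' : ∀ i, ∑ j : Fin (k+1),
          (d j.castSucc * α * (B - b j.castSucc)) * (1 - b j.castSucc * y i) ^ (α-1) = 0 := by
        intro i
        have ht : 0 < 1 - B * y i := hsub (y i) (hylt i) _
        have hfac : (∑ j : Fin (k+2), d j * α * (B - b j) * (1 - b j * y i) ^ (α-1))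
            * (1 - B * y i) ^ (-α-1) = 0 := by
          rw [Finset.sum_mul, ← hy0 i]
          exact Finset.sum_congr rfl fun j _ => by ring
        have hsum0 : ∑ j : Fin (k+2), d j * α * (B - b j) * (1 - b j * y i) ^ (α-1) = 0 := by
          rcases mul_eq_zero.mp hfac with h | h
          · exact h
          · exact absurd h (Real.rpow_pos_of_pos ht (-α-1)).ne'
        rw [Fin.sum_univ_castSucc] at hsum0
        simpa [hBdef] using hsum0
      refine ih (α-1) (by linarith) (fun j => b j.castSucc)
        (fun j => d j.castSucc * α * (B - b j.castSucc)) (fun j => hbpos _)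
        (fun i j hij => hb (Fin.castSucc_lt_castSucc_iff.mpr hij)) ?_ y hymono ?_ hz'
      · obtain ⟨j, hj⟩ := hcas
        refine ⟨j, mul_ne_zero (mul_ne_zero hj hα.ne) ?_⟩
        have := hb (Fin.castSucc_lt_last j)
        exact sub_ne_zero.mpr (ne_of_gt this)
      · intro i
        have hblt : b (Fin.last k).castSucc < B := hb (Fin.castSucc_lt_last _)
        have : 1/B < 1 / b (Fin.last k).castSucc :=
          one_div_lt_one_div_of_lt (hbpos _) hblt
        exact lt_trans (hylt i) this
    · push_neg at hcas
      have h0 := hz 0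
      rw [Fin.sum_univ_castSucc] at h0
      simp only [hcas, zero_mul, Finset.sum_const_zero, zero_add] at h0
      have hs : 0 < 1 - b (Fin.last (k+1)) * x 0 := hsub (x 0) (hlt 0) _
      have hdl : d (Fin.last (k+1)) = 0 := by
        rcases mul_eq_zero.mp h0 with h | h
        · exact h
        · exact absurd h (Real.rpow_pos_of_pos hs α).ne'
      obtain ⟨j, hj⟩ := hd
      rcases Fin.eq_castSucc_or_eq_last j with ⟨j', rfl⟩ | rfl
      · exact hj (hcas j')
      · exact hj hdl
theorem zeros_of_sqrt_sum (n : ℕ) (hn : 0 < n) (b a : Fin n → ℝ)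
    (hbpos : ∀ j, 0 < b j) (hb : StrictMono b) (c : ℝ)
    (hne : ∃ x : ℝ, x ≤ 1 / b ⟨n - 1, Nat.sub_lt hn Nat.one_pos⟩ ∧
      (∑ j, a j * Real.sqrt (1 - b j * x)) + c ≠ 0) :
    {x : ℝ | x ≤ 1 / b ⟨n - 1, Nat.sub_lt hn Nat.one_pos⟩ ∧
        (∑ j, a j * Real.sqrt (1 - b j * x)) + c = 0}.Finite ∧
    {x : ℝ | x ≤ 1 / b ⟨n - 1, Nat.sub_lt hn Nat.one_pos⟩ ∧
        (∑ j, a j * Real.sqrt (1 - b j * x)) + c = 0}.ncard ≤ n := by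
  obtain ⟨m, rfl⟩ : ∃ m, n = m + 1 := ⟨n - 1, (Nat.succ_pred_eq_of_pos hn).symm⟩
  have hL : (⟨m + 1 - 1, Nat.sub_lt hn Nat.one_pos⟩ : Fin (m+1)) = Fin.last m := rfl
  set B := b (Fin.last m) with hBdef
  have hBpos : 0 < B := hbpos _
  set Z : Set ℝ := {x : ℝ | x ≤ 1 / b ⟨m + 1 - 1, Nat.sub_lt hn Nat.one_pos⟩ ∧
      (∑ j, a j * Real.sqrt (1 - b j * x)) + c = 0} with hZdef
  have hZmem : ∀ x ∈ Z, x ≤ 1/B ∧ (∑ j, a j * Real.sqrt (1 - b j * x)) + c = 0 := by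
    intro x hx; rw [hZdef] at hx; exact hx
  by_cases ha : ∀ j, a j = 0
  · have hc : c ≠ 0 := by
      obtain ⟨x, _, hx2⟩ := hne
      simpa [ha] using hx2
    have hZ : Z = ∅ := by
      ext x
      simp only [hZdef, Set.mem_setOf_eq, Set.mem_empty_iff_false, iff_false, not_and]
      intro _
      simp [ha, hc]
    rw [hZ]
    simp
  · push_neg at ha
    obtain ⟨j0, hj0⟩ := ha
    set f : ℝ → ℝ := fun z => (∑ j, a j * Real.sqrt (1 - b j * z)) + c with hfdef
    have hfcont : Continuous f := by
      apply Continuous.add _ continuous_const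
      apply continuous_finset_sum
      intro j _
      exact continuous_const.mul (Real.continuous_sqrt.comp (by continuity))
    set d : Fin (m+1) → ℝ := fun j => -(a j * b j) / 2 with hddef
    have hsub : ∀ z : ℝ, z < 1/B → ∀ j, 0 < 1 - b j * z :=
      fun z hzlt j => aux_pos (hbpos j) (hb.monotone (Fin.le_last j)) hzlt
    have hfd : ∀ z, z < 1/B →
        HasDerivAt f (∑ j, d j * (1 - b j * z) ^ (-(1/2) : ℝ)) z := by
      intro z hzlt
      apply HasDerivAt.add_const
      apply HasDerivAt.fun_sum
      intro j _
      have hs : 0 < 1 - b j * z := hsub z hzlt j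
      have h1 : HasDerivAt (fun z : ℝ => 1 - b j * z) (-b j) z := by
        simpa using ((hasDerivAt_id z).const_mul (b j)).const_sub 1
      have h2 := (h1.sqrt hs.ne').const_mul (a j)
      convert h2 using 1
      · rfl
      have e1 : (1 - b j * z) ^ (-(1/2) : ℝ) = (Real.sqrt (1 - b j * z))⁻¹ := by
        rw [Real.sqrt_eq_rpow, ← Real.rpow_neg hs.le]
      rw [e1]
      have hsq : 0 < Real.sqrt (1 - b j * z) := Real.sqrt_pos.mpr hs
      rw [hddef]
      field_simp
    have hcard : ∀ s : Finset ℝ, ↑s ⊆ Z → s.card ≤ m + 1 := by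
      by_contra hcon
      push_neg at hcon
      obtain ⟨s, hsZ, hs⟩ := hcon
      obtain ⟨t, hts, htc⟩ := Finset.exists_subset_card_eq (show m + 2 ≤ s.card from hs)
      have htZ : ↑t ⊆ Z := fun x hx => hsZ (hts hx)
      set x : Fin (m+2) → ℝ := fun i => t.orderEmbOfFin htc i with hxdef
      have hxmono : StrictMono x := (t.orderEmbOfFin htc).strictMono
      have hxZ : ∀ i, x i ∈ Z := fun i => htZ (t.orderEmbOfFin_mem htc i)
      have hxle : ∀ i, x i ≤ 1/B := fun i => (hZmem _ (hxZ i)).1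
      have hxzero : ∀ i, f (x i) = 0 := fun i => (hZmem _ (hxZ i)).2
      have hroll : ∀ i : Fin (m+1), ∃ y, y ∈ Set.Ioo (x i.castSucc) (x i.succ) ∧
          (∑ j, d j * (1 - b j * y) ^ (-(1/2) : ℝ)) = 0 := by
        intro i
        have hab : x i.castSucc < x i.succ := hxmono Fin.castSucc_lt_succ
        exact exists_hasDerivAt_eq_zero hab hfcont.continuousOn
          (by rw [hxzero, hxzero])
          (fun z hzm => hfd z (lt_of_lt_of_le hzm.2 (hxle _)))
      choose y hy hy0 using hroll
      have hylt : ∀ i, y i < 1/B := fun i => lt_of_lt_of_le (hy i).2 (hxle _)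
      have hymono : StrictMono y := by
        rw [Fin.strictMono_iff_lt_succ]
        intro i
        have h1 := (hy i.castSucc).2
        have h2 := (hy i.succ).1
        rw [Fin.succ_castSucc] at h1
        linarith
      exact key_lemma m (-(1/2) : ℝ) (by norm_num) b d hbpos hb
        ⟨j0, by simp [hddef, hj0, (hbpos j0).ne']⟩ y hymono hylt hy0
    have hfin : Z.Finite := by
      by_contra hinf
      obtain ⟨t, hts, htc⟩ := Set.Infinite.exists_subset_card_eq hinf (m + 2)
      have := hcard t hts
      omega
    refine ⟨hfin, ?_⟩
    rw [Set.ncard_eq_toFinset_card Z hfin]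
    exact hcard hfin.toFinset (by simp)
end

section
/- Let d ≥ 2, fix j ∈ {1,…,d}, let g : ℝ^{d−1} → ℝ be continuous and 2π-periodic in each variable, and let f : ℝ^d → ℂ be continuous and 2π-periodic in each variable. Define, for ξ ∈ ℤ^d, F(ξ) = (2π)^{1 − d/2} ∫_{[−π,π]^{d−1}} f(k) e^{i k·ξ} dk′, where k′ = (k₁,…,k_{j−1},k_{j+1},…,k_d) and the j-th coordinate of k is k_j = g(k′). Then for every R > 0, ∑_{ξ ∈ B_R} |F(ξ)|² ≤ 2π (2R + 1) ∫_{[−π,π]^{d−1}} |f(k′, g(k′))|² dk′, where |f(k′,g(k′))| denotes |f| evaluated at the point k with k_j = g(k′). -/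
/- STATEMENT 13: Let d = n+1 ≥ 2, fix a coordinate j, let g : ℝ^{d−1} → ℝ be continuous
and 2π-periodic in each variable, and f : ℝ^d → ℂ continuous and 2π-periodic in each
variable.  For ξ ∈ ℤ^d set
F(ξ) = (2π)^{1 − d/2} ∫_{[−π,π]^{d−1}} f(k) e^{i k·ξ} dk′, where the j-th coordinate of
k is k_j = g(k′) and k′ collects the remaining coordinates.  Then for every R > 0,
∑_{ξ ∈ B_R} |F(ξ)|² ≤ 2π (2R+1) ∫_{[−π,π]^{d−1}} |f(k′, g(k′))|² dk′, where
B_R = {ξ ∈ ℤ^d : |ξ_i| ≤ R ∀ i}. -/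

noncomputable section

open MeasureTheory


namespace SurfaceAux

lemma oneDim (m : ℤ) :
    ∫ t in Set.Icc (-Real.pi) Real.pi, Complex.exp (Complex.I * t * m) =
      if m = 0 then ((2 * Real.pi : ℝ) : ℂ) else 0 := by
  rw [MeasureTheory.integral_Icc_eq_integral_Ioc,
    ← intervalIntegral.integral_of_le (by linarith [Real.pi_pos] : (-Real.pi) ≤ Real.pi)]
  by_cases hm : m = 0
  · simp only [hm, Int.cast_zero, mul_zero, Complex.exp_zero, if_true]
    rw [intervalIntegral.integral_const, Complex.real_smul]
    push_cast
    ring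
  · simp only [hm, if_false]
    have h1 : ∀ t : ℝ, Complex.I * t * m = (Complex.I * m) * t := by intro t; ring
    simp_rw [h1]
    rw [integral_exp_mul_complex (by simp [Complex.I_ne_zero, hm])]
    have h2 : Complex.I * m * Real.pi = Complex.I * m * (-Real.pi : ℝ) + m * (2 * Real.pi * Complex.I) := by
      push_cast; ring
    rw [h2, Complex.exp_add, Complex.exp_int_mul_two_pi_mul_I]
    ring

lemma boxInt (n : ℕ) (ζ : Fin n → ℤ) :
    ∫ k in Set.Icc (fun _ : Fin n => -Real.pi) (fun _ => Real.pi),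
        Complex.exp (Complex.I * ∑ i, (k i : ℂ) * (ζ i : ℂ)) =
      if ζ = 0 then (((2 * Real.pi) ^ n : ℝ) : ℂ) else 0 := by
  have h1 : ∀ k : Fin n → ℝ, Complex.exp (Complex.I * ∑ i, (k i : ℂ) * ζ i)
      = ∏ i, Complex.exp (Complex.I * (k i) * ζ i) := by
    intro k
    rw [Finset.mul_sum, Complex.exp_sum]
    exact Finset.prod_congr rfl fun i _ => by ring_nf
  rw [← integral_indicator measurableSet_Icc]
  have h2 : (Set.Icc (fun _ : Fin n => -Real.pi) (fun _ => Real.pi)).indicator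
      (fun k => Complex.exp (Complex.I * ∑ i, (k i : ℂ) * ζ i))
      = fun k => ∏ i, (Set.Icc (-Real.pi) Real.pi).indicator
          (fun t => Complex.exp (Complex.I * t * ζ i)) (k i) := by
    funext k
    by_cases hk : k ∈ Set.Icc (fun _ : Fin n => -Real.pi) (fun _ => Real.pi)
    · rw [Set.indicator_of_mem hk, h1 k]
      refine Finset.prod_congr rfl fun i _ => ?_
      rw [Set.indicator_of_mem (Set.mem_Icc.mpr ⟨hk.1 i, hk.2 i⟩)]
    · rw [Set.indicator_of_notMem hk]
      have : ∃ i, k i ∉ Set.Icc (-Real.pi) Real.pi := by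
        by_contra hc; push_neg at hc
        exact hk ⟨fun i => (hc i).1, fun i => (hc i).2⟩
      obtain ⟨i, hi⟩ := this
      exact (Finset.prod_eq_zero (Finset.mem_univ i) (Set.indicator_of_notMem hi _)).symm
  rw [h2, MeasureTheory.volume_pi]
  beta_reduce
  rw [MeasureTheory.integral_fintype_prod_eq_prod
    (fun i t => (Set.Icc (-Real.pi) Real.pi).indicator
      (fun u => Complex.exp (Complex.I * u * ζ i)) t)]
  simp_rw [integral_indicator measurableSet_Icc, oneDim]
  by_cases hζ : ζ = 0
  · subst hζ
    simp only [Pi.zero_apply, if_true, Finset.prod_const, Finset.card_univ, Fintype.card_fin,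
      if_true]
    push_cast
    ring
  · obtain ⟨i, hi⟩ := Function.ne_iff.1 hζ
    simp only [Pi.zero_apply] at hi
    rw [if_neg hζ]
    exact Finset.prod_eq_zero (Finset.mem_univ i) (by simp [hi])

lemma mem2 {X : Type*} [MeasurableSpace X] [TopologicalSpace X] [OpensMeasurableSpace X]
    {s : Set X} (hs : IsCompact s) (hms : MeasurableSet s)
    {ν : Measure X} [IsFiniteMeasure (ν.restrict s)]
    {f : X → ℂ} (hf : Continuous f) : MemLp f 2 (ν.restrict s) := by
  obtain ⟨C, hC⟩ := hs.exists_bound_of_continuousOn hf.continuousOn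
  have hb : ∀ᵐ x ∂(ν.restrict s), ‖f x‖ ≤ C := by
    filter_upwards [ae_restrict_mem hms] with x hx using hC x hx
  exact (memLp_top_of_bound hf.aestronglyMeasurable.restrict C hb).mono_exponent le_top

end SurfaceAux


theorem surface_fourier_l2_bound (n : ℕ) (hn : 1 ≤ n) (j : Fin (n + 1))
    (g : (Fin n → ℝ) → ℝ) (hgc : Continuous g)
    (hgp : ∀ (k' : Fin n → ℝ) (i : Fin n),
      g (Function.update k' i (k' i + 2 * Real.pi)) = g k')
    (f : (Fin (n + 1) → ℝ) → ℂ) (hfc : Continuous f)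
    (hfp : ∀ (k : Fin (n + 1) → ℝ) (i : Fin (n + 1)),
      f (Function.update k i (k i + 2 * Real.pi)) = f k)
    (F : (Fin (n + 1) → ℤ) → ℂ)
    (hF : ∀ ξ : Fin (n + 1) → ℤ,
      F ξ = ((2 * Real.pi) ^ ((1 : ℝ) - (n + 1 : ℝ) / 2) : ℝ) *
        ∫ k' in Set.Icc (fun _ : Fin n => -Real.pi) (fun _ => Real.pi),
          f (j.insertNth (g k') k') *
            Complex.exp (Complex.I * ↑(∑ i, (j.insertNth (g k') k' : Fin (n + 1) → ℝ) i * (ξ i : ℝ)))) :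
    ∀ R : ℝ, 0 < R →
      (∑ᶠ ξ ∈ {ξ : Fin (n + 1) → ℤ | ∀ i, |(ξ i : ℝ)| ≤ R}, ‖F ξ‖ ^ 2) ≤
        2 * Real.pi * (2 * R + 1) *
          ∫ k' in Set.Icc (fun _ : Fin n => -Real.pi) (fun _ => Real.pi),
            ‖f (j.insertNth (g k') k')‖ ^ 2 := by
  classical
  intro R hR
  have hπ := Real.pi_pos
  set μ : Measure (Fin n → ℝ) :=
    volume.restrict (Set.Icc (fun _ : Fin n => -Real.pi) (fun _ => Real.pi)) with hμdef
  haveI : IsFiniteMeasure μ := ⟨by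
    rw [hμdef, Measure.restrict_apply_univ]
    exact isCompact_Icc.measure_lt_top⟩
  set h : (Fin n → ℝ) → ℂ := fun k' => f (j.insertNth (g k') k') with hh
  have hins : Continuous fun k' : Fin n → ℝ => (j.insertNth (g k') k' : Fin (n + 1) → ℝ) :=
    by fun_prop
  have hhc : Continuous h := hfc.comp hins
  set E : (Fin n → ℤ) → (Fin n → ℝ) → ℂ :=
    fun ξ' k => Complex.exp (-(Complex.I * ∑ i, (k i : ℂ) * (ξ' i : ℂ))) with hE
  have hEc : ∀ ξ', Continuous (E ξ') := by intro ξ'; simp only [hE]; fun_prop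
  have memE : ∀ ξ', MemLp (E ξ') 2 μ :=
    fun ξ' => SurfaceAux.mem2 isCompact_Icc measurableSet_Icc (hEc ξ')
  set H : ℤ → (Fin n → ℝ) → ℂ :=
    fun m k => h k * Complex.exp (Complex.I * (g k : ℂ) * (m : ℂ)) with hHdef
  have hHc : ∀ m, Continuous (H m) := by
    intro m
    simp only [hHdef]
    exact hhc.mul (Complex.continuous_exp.comp (by fun_prop))
  have memH : ∀ m, MemLp (H m) 2 μ :=
    fun m => SurfaceAux.mem2 isCompact_Icc measurableSet_Icc (hHc m)
  -- inner products of `toLp`s are integrals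
  have inner_toLp : ∀ (a b : (Fin n → ℝ) → ℂ) (ha : MemLp a 2 μ) (hb : MemLp b 2 μ),
      (inner ℂ (ha.toLp a) (hb.toLp b) : ℂ) = ∫ k, (starRingEnd ℂ) (a k) * b k ∂μ := by
    intro a b ha hb
    rw [MeasureTheory.L2.inner_def]
    refine integral_congr_ae ?_
    filter_upwards [ha.coeFn_toLp, hb.coeFn_toLp] with k h1 h2
    rw [h1, h2, RCLike.inner_apply, mul_comm]
  -- key orthogonality integral
  have keyInt : ∀ ξ' η' : Fin n → ℤ,
      (∫ k, (starRingEnd ℂ) (E ξ' k) * E η' k ∂μ)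
        = if ξ' = η' then (((2 * Real.pi) ^ n : ℝ) : ℂ) else 0 := by
    intro ξ' η'
    have hpt : ∀ k : Fin n → ℝ, (starRingEnd ℂ) (E ξ' k) * E η' k
        = Complex.exp (Complex.I * ∑ i, (k i : ℂ) * (((ξ' - η') i : ℤ) : ℂ)) := by
      intro k
      simp only [hE]
      rw [← Complex.exp_conj, ← Complex.exp_add]
      congr 1
      have hconj : (starRingEnd ℂ) (-(Complex.I * ∑ i, (k i : ℂ) * (ξ' i : ℂ)))
          = Complex.I * ∑ i, (k i : ℂ) * (ξ' i : ℂ) := by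
        simp [map_sum, Complex.conj_ofReal]
      rw [hconj]
      have hsub : ∑ i, (k i : ℂ) * (((ξ' - η') i : ℤ) : ℂ)
          = (∑ i, (k i : ℂ) * (ξ' i : ℂ)) - ∑ i, (k i : ℂ) * (η' i : ℂ) := by
        rw [← Finset.sum_sub_distrib]
        refine Finset.sum_congr rfl fun i _ => ?_
        push_cast [Pi.sub_apply]
        ring
      rw [hsub]
      ring
    simp_rw [hpt]
    rw [hμdef, SurfaceAux.boxInt n (ξ' - η')]
    simp [sub_eq_zero]
  -- the orthonormal family
  set c : ℝ := Real.sqrt (((2 * Real.pi) ^ n)⁻¹) with hc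
  have h2pin : (0 : ℝ) < (2 * Real.pi) ^ n := by positivity
  have hc0 : 0 < c := Real.sqrt_pos.mpr (by positivity)
  have hcsq : c ^ 2 = ((2 * Real.pi) ^ n)⁻¹ := Real.sq_sqrt (by positivity)
  set v : (Fin n → ℤ) → Lp ℂ 2 μ := fun ξ' => ((c : ℂ)) • (memE ξ').toLp (E ξ') with hv
  have hon : Orthonormal ℂ v := by
    rw [orthonormal_iff_ite]
    intro ξ' η'
    simp only [hv]
    rw [inner_smul_left, inner_smul_right,
      inner_toLp (E ξ') (E η') (memE ξ') (memE η'), keyInt ξ' η', Complex.conj_ofReal]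
    by_cases hxy : ξ' = η'
    · rw [if_pos hxy, if_pos hxy]
      have hmul : c * (c * (2 * Real.pi) ^ n) = 1 := by
        rw [← mul_assoc, ← sq, hcsq]
        field_simp
      rw [← Complex.ofReal_mul, ← Complex.ofReal_mul, hmul, Complex.ofReal_one]
    · rw [if_neg hxy, if_neg hxy, mul_zero, mul_zero]
  -- norm of H m in L2
  have hnorm : ∀ m : ℤ, ‖(memH m).toLp (H m)‖ ^ 2 = ∫ k, ‖h k‖ ^ 2 ∂μ := by
    intro m
    have h1 : (inner ℂ ((memH m).toLp (H m)) ((memH m).toLp (H m)) : ℂ)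
        = ((∫ k, ‖h k‖ ^ 2 ∂μ : ℝ) : ℂ) := by
      rw [inner_toLp (H m) (H m) (memH m) (memH m)]
      have hpt : ∀ k, (starRingEnd ℂ) (H m k) * H m k = ((‖h k‖ ^ 2 : ℝ) : ℂ) := by
        intro k
        rw [RCLike.conj_mul]
        norm_cast
        simp only [hHdef]
        rw [norm_mul]
        have hexp1 : ‖Complex.exp (Complex.I * (g k : ℂ) * (m : ℂ))‖ = 1 := by
          rw [Complex.norm_exp]
          simp
        rw [hexp1, mul_one]
        rfl
      simp_rw [hpt]
      exact integral_ofReal (𝕜 := ℂ) (f := fun k => ‖h k‖ ^ 2) (μ := μ)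
    have h2 := inner_self_eq_norm_sq (𝕜 := ℂ) ((memH m).toLp (H m))
    rw [h1] at h2
    simpa using h2.symm
  -- express F via inner products
  set C : ℝ := (2 * Real.pi) ^ ((1 : ℝ) - (n + 1 : ℝ) / 2) with hC0
  have hCpos : 0 < C := Real.rpow_pos_of_pos (by positivity) _
  have hcne : (c : ℂ) ≠ 0 := by exact_mod_cast hc0.ne'
  have hFe : ∀ (m : ℤ) (ξ' : Fin n → ℤ),
      F (j.insertNth m ξ') = (C : ℂ) * (c : ℂ)⁻¹ *
        inner ℂ (v ξ') ((memH m).toLp (H m)) := by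
    intro m ξ'
    rw [hF]
    have hint : (∫ k in Set.Icc (fun _ : Fin n => -Real.pi) (fun _ => Real.pi),
        f (j.insertNth (g k) k) *
          Complex.exp (Complex.I * ↑(∑ i, (j.insertNth (g k) k : Fin (n + 1) → ℝ) i
            * ((j.insertNth m ξ' : Fin (n + 1) → ℤ) i : ℝ))))
        = ∫ k, (starRingEnd ℂ) (E ξ' k) * H m k ∂μ := by
      rw [hμdef]
      refine integral_congr_ae (Filter.Eventually.of_forall fun k => ?_)
      dsimp only
      have hsum : ∑ i, (j.insertNth (g k) k : Fin (n + 1) → ℝ) i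
            * ((j.insertNth m ξ' : Fin (n + 1) → ℤ) i : ℝ)
          = g k * (m : ℝ) + ∑ i, k i * (ξ' i : ℝ) := by
        rw [Fin.sum_univ_succAbove _ j]
        simp [Fin.insertNth_apply_same, Fin.insertNth_apply_succAbove]
      rw [hsum]
      have hconj : (starRingEnd ℂ) (E ξ' k)
          = Complex.exp (Complex.I * ∑ i, (k i : ℂ) * (ξ' i : ℂ)) := by
        simp only [hE]
        rw [← Complex.exp_conj]
        congr 1
        simp [map_sum, Complex.conj_ofReal]
      rw [hconj]
      simp only [hHdef, hh]
      have hsplit : Complex.I * ((g k * (m : ℝ) + ∑ i, k i * (ξ' i : ℝ) : ℝ) : ℂ)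
          = Complex.I * ∑ i, (k i : ℂ) * (ξ' i : ℂ) + Complex.I * (g k : ℂ) * (m : ℂ) := by
        push_cast
        ring
      rw [hsplit, Complex.exp_add]
      ring
    rw [hint]
    simp only [hv]
    rw [inner_smul_left, Complex.conj_ofReal,
      inner_toLp (E ξ') (H m) (memE ξ') (memH m)]
    rw [mul_assoc, ← mul_assoc ((c : ℂ))⁻¹, inv_mul_cancel₀ hcne, one_mul]
  -- constant computation
  have hKc : (C * c⁻¹) ^ 2 = 2 * Real.pi := by
    have h2 : (c⁻¹) ^ 2 = (2 * Real.pi) ^ (n : ℝ) := by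
      rw [inv_pow, hcsq, inv_inv, Real.rpow_natCast]
    have h1 : C ^ 2 = (2 * Real.pi) ^ (((1 : ℝ) - (n + 1 : ℝ) / 2) + ((1 : ℝ) - (n + 1 : ℝ) / 2)) := by
      rw [hC0, sq, ← Real.rpow_add (by positivity)]
    rw [mul_pow, h1, h2, ← Real.rpow_add (by positivity)]
    have h3 : ((1 : ℝ) - (n + 1 : ℝ) / 2) + ((1 : ℝ) - (n + 1 : ℝ) / 2) + (n : ℝ) = 1 := by
      push_cast
      ring
    rw [h3, Real.rpow_one]
  have hnormC : ‖(C : ℂ) * (c : ℂ)⁻¹‖ = C * c⁻¹ := by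
    rw [norm_mul, norm_inv]
    simp [Complex.norm_real, abs_of_pos hCpos, abs_of_pos hc0]
  have hI0 : 0 ≤ ∫ k, ‖h k‖ ^ 2 ∂μ := integral_nonneg fun k => sq_nonneg _
  -- Bessel bound for each m
  have besselm : ∀ (m : ℤ) (s : Finset (Fin n → ℤ)),
      ∑ ξ' ∈ s, ‖F (j.insertNth m ξ')‖ ^ 2 ≤ 2 * Real.pi * ∫ k, ‖h k‖ ^ 2 ∂μ := by
    intro m s
    have hx := hon.sum_inner_products_le (s := s) ((memH m).toLp (H m))
    calc ∑ ξ' ∈ s, ‖F (j.insertNth m ξ')‖ ^ 2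
        = ∑ ξ' ∈ s, 2 * Real.pi * ‖(inner ℂ (v ξ') ((memH m).toLp (H m)) : ℂ)‖ ^ 2 := by
          refine Finset.sum_congr rfl fun ξ' _ => ?_
          rw [hFe m ξ', norm_mul, mul_pow, hnormC, hKc]
      _ = 2 * Real.pi * ∑ ξ' ∈ s, ‖(inner ℂ (v ξ') ((memH m).toLp (H m)) : ℂ)‖ ^ 2 :=
          (Finset.mul_sum _ _ _).symm
      _ ≤ 2 * Real.pi * ‖(memH m).toLp (H m)‖ ^ 2 :=
          mul_le_mul_of_nonneg_left hx (by positivity)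
      _ = 2 * Real.pi * ∫ k, ‖h k‖ ^ 2 ∂μ := by rw [hnorm m]
  -- counting
  set M : ℤ := ⌊R⌋ with hM
  have hM0 : 0 ≤ M := Int.floor_nonneg.mpr hR.le
  have hMR : (M : ℝ) ≤ R := Int.floor_le R
  have hset : {ξ : Fin (n + 1) → ℤ | ∀ i, |(ξ i : ℝ)| ≤ R}
      = ↑(Fintype.piFinset fun _ : Fin (n + 1) => Finset.Icc (-M) M) := by
    ext ξ
    simp only [Set.mem_setOf_eq, Finset.mem_coe, Fintype.mem_piFinset, Finset.mem_Icc, ← abs_le]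
    constructor
    · intro hξ i
      refine Int.le_floor.mpr ?_
      rw [Int.cast_abs]
      exact hξ i
    · intro hξ i
      calc |(ξ i : ℝ)| = ((|ξ i| : ℤ) : ℝ) := by rw [Int.cast_abs]
        _ ≤ (M : ℝ) := by exact_mod_cast hξ i
        _ ≤ R := hMR
  rw [hset, finsum_mem_coe_finset]
  have hre : (∑ ξ ∈ Fintype.piFinset (fun _ : Fin (n + 1) => Finset.Icc (-M) M), ‖F ξ‖ ^ 2)
      = ∑ p ∈ (Finset.Icc (-M) M) ×ˢ (Fintype.piFinset fun _ : Fin n => Finset.Icc (-M) M),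
          ‖F (j.insertNth p.1 p.2)‖ ^ 2 := by
    refine Finset.sum_nbij' (fun ξ => (ξ j, j.removeNth ξ))
      (fun p => j.insertNth p.1 p.2) ?_ ?_ ?_ ?_ ?_
    · intro ξ hξ
      rw [Fintype.mem_piFinset] at hξ
      rw [Finset.mem_product]
      exact ⟨hξ j, by rw [Fintype.mem_piFinset]; intro i; exact hξ _⟩
    · intro p hp
      rw [Finset.mem_product, Fintype.mem_piFinset] at hp
      rw [Fintype.mem_piFinset]
      intro i
      rcases eq_or_ne i j with rfl | hij
      · rw [Fin.insertNth_apply_same]; exact hp.1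
      · obtain ⟨l, rfl⟩ := Fin.exists_succAbove_eq hij
        rw [Fin.insertNth_apply_succAbove]
        exact hp.2 l
    · intro ξ _
      exact Fin.insertNth_self_removeNth j ξ
    · intro p _
      simp [Fin.insertNth_apply_same, Fin.removeNth_insertNth]
    · intro ξ _
      dsimp only
      rw [Fin.insertNth_self_removeNth]
  rw [hre, Finset.sum_product]
  have hcard : ((Finset.Icc (-M) M).card : ℝ) ≤ 2 * R + 1 := by
    have h1 : ((Finset.Icc (-M) M).card : ℤ) = 2 * M + 1 := by
      rw [Int.card_Icc, Int.toNat_of_nonneg (by linarith)]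
      ring
    have h2 : ((Finset.Icc (-M) M).card : ℝ) = 2 * (M : ℝ) + 1 := by exact_mod_cast h1
    rw [h2]
    linarith
  have hI : (∫ k, ‖h k‖ ^ 2 ∂μ)
      = ∫ k', ‖f (j.insertNth (g k') k')‖ ^ 2 ∂μ := rfl
  refine le_trans (Finset.sum_le_sum fun m _ => besselm m _) ?_
  rw [Finset.sum_const, nsmul_eq_mul, ← hI]
  calc ((Finset.Icc (-M) M).card : ℝ) * (2 * Real.pi * ∫ k, ‖h k‖ ^ 2 ∂μ)
      ≤ (2 * R + 1) * (2 * Real.pi * ∫ k, ‖h k‖ ^ 2 ∂μ) :=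
        mul_le_mul_of_nonneg_right hcard (mul_nonneg (by positivity) hI0)
    _ = 2 * Real.pi * (2 * R + 1) * ∫ k, ‖h k‖ ^ 2 ∂μ := by ring
end
end
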